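/- arXiv:1409.3436 — 8 statements merged into one kernel-verified Lean document; each statement's English description precedes it below -/
import Mathlib

section
/- Let d be a positive integer and let S_1, ..., S_{d+1} be pairwise disjoint two-element sets of points in ℝ^d such that the 2(d+1) points of ⋃_{i=1}^{d+1} S_i are in general position with respect to the origin, meaning that every d-element subset of ⋃_{i=1}^{d+1} S_i is linearly independent. Then the number of colorful sets T ⊆ ⋃_{i=1}^{d+1} S_i (i.e., |T ∩ S_i| ≤ 1 for all i) such that 0 lies in the convex hull of T is even. -/
/-!
Fix the pair `S₀ = {p, p'}`. Any `d` of the points are linearly independent, so a colorful set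
with `0` in its convex hull has `d + 1` points and takes one point from every pair. A choice `w`
of one point `x_w(k)` from each of the other pairs is a basis, and `{p} ∪ x_w` is positively
dependent iff `-p` lies in the open cone spanned by `x_w`. So the count is `m(-p) + m(-p')`, where
`m(v)` (`coneCount`) is the number of cones of this octahedral fan containing `v`.

Move `v` along the segment from `-p` to `-p'`. By general position it never lies on two facets of
one cone at once, so membership of `v` in a cone changes parity exactly at the crossings of its
facets. A crossing of the facet of cone `w` opposite `x_w(k)` is also a crossing of that facet for
the cone with `w k` flipped; crossings thus come in pairs and `m(-p) ≡ m(-p') (mod 2)`.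
-/

open Set Function
open scoped Finset

namespace AffineMap

variable (f : ℝ →ᵃ[ℝ] ℝ)

theorem apply_eq_add_mul (t : ℝ) : f t = f 0 + t * f.linear 1 := by
  have h := congrFun f.decomp t
  simp only [Pi.add_apply] at h
  rw [h, add_comm, ← smul_eq_mul, ← f.linear.map_smul, smul_eq_mul, mul_one]

variable {f}

theorem eq_of_apply_eq_zero {s t t' : ℝ} (hs : f s ≠ 0) (ht : f t = 0) (ht' : f t' = 0) :
    t = t' := by
  rw [f.apply_eq_add_mul s] at hs
  rw [f.apply_eq_add_mul t] at ht
  rw [f.apply_eq_add_mul t'] at ht'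
  by_contra hne
  have hslope : f.linear 1 = 0 :=
    (mul_eq_zero.mp (show (t - t') * f.linear 1 = 0 by linarith)).resolve_left (sub_ne_zero.mpr hne)
  simp_all

theorem pos_iff_pos_of_forall_ne_zero {s u : ℝ} (hsu : s ≤ u) (hs : f s ≠ 0) (hu : f u ≠ 0)
    (hf : ∀ t ∈ Ioo s u, f t ≠ 0) : 0 < f s ↔ 0 < f u := by
  have hivt := intermediate_value_uIcc (a := s) (b := u)
    (f.continuous_of_finiteDimensional.continuousOn (s := uIcc s u))
  rw [uIcc_of_le hsu] at hivt
  by_contra h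
  obtain ⟨t, ht, h0⟩ := hivt (show (0 : ℝ) ∈ uIcc (f s) (f u) by
    rw [Set.mem_uIcc]
    rcases hs.lt_or_gt with hs' | hs' <;> rcases hu.lt_or_gt with hu' | hu'
    · exact absurd (iff_of_false hs'.not_gt hu'.not_gt) h
    · exact Or.inl ⟨hs'.le, hu'.le⟩
    · exact Or.inr ⟨hu'.le, hs'.le⟩
    · exact absurd (iff_of_true hs' hu') h)
  rcases eq_or_lt_of_le ht.1 with rfl | hst
  · exact hs h0
  rcases eq_or_lt_of_le ht.2 with rfl | htu
  · exact hu h0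
  exact hf t ⟨hst, htu⟩ h0

theorem pos_iff_not_pos_of_apply_eq_zero {s t u : ℝ} (hst : s < t) (htu : t < u) (ht : f t = 0)
    (hs : f s ≠ 0) : 0 < f u ↔ ¬ 0 < f s := by
  rw [f.apply_eq_add_mul s] at hs ⊢
  rw [f.apply_eq_add_mul t] at ht
  rw [f.apply_eq_add_mul u]
  rcases hs.lt_or_gt with h | h
  · constructor <;> intro <;> nlinarith
  · constructor <;> intro <;> nlinarith

end AffineMap

section CrossingParity

variable {ι : Type*} [Fintype ι] {f : ι → ℝ →ᵃ[ℝ] ℝ} {s₁ s₂ : ℝ}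

/-- The path `t ↦ (f j t)_j` passes through the facet `{y_i = 0}` of the open positive orthant
during `(s₁, s₂)`. -/
def CrossesFacet (f : ι → ℝ →ᵃ[ℝ] ℝ) (s₁ s₂ : ℝ) (i : ι) : Prop :=
  ∃ t ∈ Ioo s₁ s₂, f i t = 0 ∧ ∀ j ≠ i, 0 < f j t

open Classical in
theorem card_crossesFacet_eq_add {m : ℝ} (hm : m ∈ Ioo s₁ s₂) (h₁ : ∀ i, f i s₁ ≠ 0)
    (hm₀ : ∀ i, f i m ≠ 0) :
    #{i | CrossesFacet f s₁ s₂ i} =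
      #{i | CrossesFacet f s₁ m i} + #{i | CrossesFacet f m s₂ i} := by
  rw [← Finset.card_union_of_disjoint, ← Finset.filter_or]
  · congr 1
    ext i
    simp only [Finset.mem_filter, Finset.mem_univ, true_and]
    constructor
    · rintro ⟨t, ht, hzero⟩
      rcases (show t ≠ m by rintro rfl; exact hm₀ i hzero.1).lt_or_gt with h | h
      · exact Or.inl ⟨t, ⟨ht.1, h⟩, hzero⟩
      · exact Or.inr ⟨t, ⟨h, ht.2⟩, hzero⟩
    · rintro (⟨t, ht, hzero⟩ | ⟨t, ht, hzero⟩)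
      · exact ⟨t, ⟨ht.1, ht.2.trans hm.2⟩, hzero⟩
      · exact ⟨t, ⟨hm.1.trans ht.1, ht.2⟩, hzero⟩
  · refine Finset.disjoint_filter.mpr fun i _ ⟨t, ht, h0, _⟩ ⟨t', ht', h0', _⟩ => ?_
    exact (ht.2.trans ht'.1).ne ((f i).eq_of_apply_eq_zero (h₁ i) h0 h0')

open Classical in
theorem parity_eq_card_crossesFacet_of_forall_ne_zero (h12 : s₁ ≤ s₂) (h₁ : ∀ i, f i s₁ ≠ 0)
    (h₂ : ∀ i, f i s₂ ≠ 0) (hne : ∀ t ∈ Ioo s₁ s₂, ∀ i, f i t ≠ 0) :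
    ((if ∀ i, 0 < f i s₁ then 1 else 0) + (if ∀ i, 0 < f i s₂ then 1 else 0) : ZMod 2) =
      #{i | CrossesFacet f s₁ s₂ i} := by
  have hsign (i : ι) : 0 < f i s₁ ↔ 0 < f i s₂ :=
    (f i).pos_iff_pos_of_forall_ne_zero h12 (h₁ i) (h₂ i) fun t ht => hne t ht i
  have hcross (i : ι) : ¬ CrossesFacet f s₁ s₂ i := fun ⟨t, ht, h0, _⟩ => hne t ht i h0
  simp only [forall_congr' hsign, hcross, Finset.filter_false, Finset.card_empty, Nat.cast_zero]
  exact CharTwo.add_self_eq_zero _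

open Classical in
theorem parity_eq_card_crossesFacet_of_unique_zero (h₁ : ∀ i, f i s₁ ≠ 0)
    (h₂ : ∀ i, f i s₂ ≠ 0) {t₀ : ℝ} (ht₀ : t₀ ∈ Ioo s₁ s₂) {i₀ : ι} (hi₀ : f i₀ t₀ = 0)
    (hzero : ∀ t ∈ Ioo s₁ s₂, ∀ i, f i t = 0 → t = t₀ ∧ i = i₀) :
    ((if ∀ i, 0 < f i s₁ then 1 else 0) + (if ∀ i, 0 < f i s₂ then 1 else 0) : ZMod 2) =
      #{i | CrossesFacet f s₁ s₂ i} := by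
  have hsign (j : ι) (hj : j ≠ i₀) : (0 < f j s₁ ↔ 0 < f j t₀) ∧ (0 < f j t₀ ↔ 0 < f j s₂) := by
    have hne : ∀ t ∈ Ioo s₁ s₂, f j t ≠ 0 := fun t ht h0 => hj (hzero t ht j h0).2
    exact ⟨(f j).pos_iff_pos_of_forall_ne_zero ht₀.1.le (h₁ j) (hne t₀ ht₀)
        fun t ht => hne t ⟨ht.1, ht.2.trans ht₀.2⟩,
      (f j).pos_iff_pos_of_forall_ne_zero ht₀.2.le (hne t₀ ht₀) (h₂ j)
        fun t ht => hne t ⟨ht₀.1.trans ht.1, ht.2⟩⟩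
  have hcross (i : ι) : CrossesFacet f s₁ s₂ i ↔ i = i₀ ∧ ∀ j ≠ i₀, 0 < f j t₀ := by
    refine ⟨fun ⟨t, ht, h0, hpos⟩ => ?_, ?_⟩
    · obtain ⟨rfl, rfl⟩ := hzero t ht i h0
      exact ⟨rfl, hpos⟩
    · rintro ⟨rfl, hpos⟩
      exact ⟨t₀, ht₀, hi₀, hpos⟩
  have hs₁ : (∀ i, 0 < f i s₁) ↔ (∀ j ≠ i₀, 0 < f j t₀) ∧ 0 < f i₀ s₁ := by
    rw [← and_forall_ne i₀, and_comm]
    exact and_congr_left' (forall₂_congr fun j hj => (hsign j hj).1)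
  have hs₂ : (∀ i, 0 < f i s₂) ↔ (∀ j ≠ i₀, 0 < f j t₀) ∧ ¬ 0 < f i₀ s₁ := by
    rw [← and_forall_ne i₀, and_comm]
    exact and_congr (forall₂_congr fun j hj => (hsign j hj).2.symm)
      ((f i₀).pos_iff_not_pos_of_apply_eq_zero ht₀.1 ht₀.2 hi₀ (h₁ i₀))
  generalize (∀ j ≠ i₀, 0 < f j t₀) = P at hcross hs₁ hs₂
  have hcard : #{i | CrossesFacet f s₁ s₂ i} = if P then 1 else 0 := by
    split_ifs with hP
    · exact Finset.card_eq_one.mpr ⟨i₀, by ext; simp [hcross, hP]⟩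
    · exact Finset.card_eq_zero.mpr (by ext; simp [hcross, hP])
  simp only [hcard, hs₁, hs₂]
  by_cases hP : P <;> by_cases hs : 0 < f i₀ s₁ <;> simp [hP, hs]

theorem finite_setOf_exists_apply_eq_zero (h : ∀ i, f i s₁ ≠ 0) :
    {t | ∃ i, f i t = 0}.Finite :=
  (Set.finite_iUnion fun i => Set.Subsingleton.finite (s := {t | f i t = 0})
    fun _ ht _ ht' => (f i).eq_of_apply_eq_zero (h i) ht ht').subset
    fun _ ⟨i, h⟩ => Set.mem_iUnion.mpr ⟨i, h⟩

open Classical in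
theorem parity_eq_card_crossesFacet (h12 : s₁ ≤ s₂) (h₁ : ∀ i, f i s₁ ≠ 0) (h₂ : ∀ i, f i s₂ ≠ 0)
    (hsimple : ∀ t ∈ Ioo s₁ s₂, ∀ i j, f i t = 0 → f j t = 0 → i = j) :
    ((if ∀ i, 0 < f i s₁ then 1 else 0) + (if ∀ i, 0 < f i s₂ then 1 else 0) : ZMod 2) =
      #{i | CrossesFacet f s₁ s₂ i} := by
  obtain ⟨R, hR⟩ : ∃ R : Finset ℝ, ∀ i t, f i t = 0 → t ∈ R :=
    ⟨_, fun i t h => (finite_setOf_exists_apply_eq_zero h₁).mem_toFinset.mpr ⟨i, h⟩⟩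
  -- With two distinct zero times in `(s₁, s₂)`, cut at a regular time between them; otherwise
  -- only one `f i` vanishes there, and only once.
  induction hn : #{t ∈ R | t ∈ Ioo s₁ s₂} using Nat.strong_induction_on generalizing s₁ s₂ with
  | _ n ih =>
  by_cases htwo : ∃ t ∈ Ioo s₁ s₂, ∃ t' ∈ Ioo s₁ s₂, t < t' ∧ (∃ i, f i t = 0) ∧ ∃ j, f j t' = 0
  · obtain ⟨t, ht, t', ht', hlt, ⟨i, hi⟩, j, hj⟩ := htwo
    obtain ⟨m, hm, hmR⟩ := (Set.Ioo_infinite hlt).exists_notMem_finset R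
    have hm₀ : ∀ i, f i m ≠ 0 := fun i h => hmR (hR i m h)
    have hmI : m ∈ Ioo s₁ s₂ := ⟨ht.1.trans hm.1, hm.2.trans ht'.2⟩
    have hfewer : ∀ a b, Ioo a b ⊆ Ioo s₁ s₂ → (t ∉ Ioo a b ∨ t' ∉ Ioo a b) →
        #{t ∈ R | t ∈ Ioo a b} < n := by
      intro a b hab hout
      rw [← hn]
      refine Finset.card_lt_card
        ⟨Finset.monotone_filter_right _ fun x _ hx => hab hx, fun hsub => ?_⟩
      rcases hout with hout | hout
      · exact hout (Finset.mem_filter.mp (hsub (Finset.mem_filter.mpr ⟨hR i t hi, ht⟩))).2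
      · exact hout (Finset.mem_filter.mp (hsub (Finset.mem_filter.mpr ⟨hR j t' hj, ht'⟩))).2
    rw [card_crossesFacet_eq_add hmI h₁ hm₀, Nat.cast_add,
      ← ih _ (hfewer s₁ m (Ioo_subset_Ioo_right hmI.2.le) (Or.inr fun h => h.2.not_gt hm.2))
        hmI.1.le h₁ hm₀ (fun t ht => hsimple t ⟨ht.1, ht.2.trans hmI.2⟩) rfl,
      ← ih _ (hfewer m s₂ (Ioo_subset_Ioo_left hmI.1.le) (Or.inl fun h => h.1.not_gt hm.1))
        hmI.2.le hm₀ h₂ (fun t ht => hsimple t ⟨hmI.1.trans ht.1, ht.2⟩) rfl]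
    linear_combination (CharTwo.add_self_eq_zero (if ∀ i, 0 < f i m then (1 : ZMod 2) else 0)).symm
  · push Not at htwo
    by_cases hz : ∃ t₀ ∈ Ioo s₁ s₂, ∃ i₀, f i₀ t₀ = 0
    · obtain ⟨t₀, ht₀, i₀, hi₀⟩ := hz
      refine parity_eq_card_crossesFacet_of_unique_zero h₁ h₂ ht₀ hi₀ fun t ht i hi => ?_
      obtain rfl : t = t₀ := by
        rcases lt_trichotomy t t₀ with h | h | h
        · exact absurd hi₀ (htwo t ht t₀ ht₀ h ⟨i, hi⟩ i₀)
        · exact h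
        · exact absurd hi (htwo t₀ ht₀ t ht h ⟨i₀, hi₀⟩ i)
      exact ⟨rfl, hsimple t ht i i₀ hi hi₀⟩
    · push Not at hz
      exact parity_eq_card_crossesFacet_of_forall_ne_zero h12 h₁ h₂ hz

end CrossingParity

section OctahedralFan

variable {ι V : Type*} [AddCommGroup V] [Module ℝ V] {b : (ι → Bool) → Module.Basis ι ℝ V}

noncomputable def segmentCoord (b : (ι → Bool) → Module.Basis ι ℝ V) (v₀ v₁ : V) (w : ι → Bool)
    (k : ι) : ℝ →ᵃ[ℝ] ℝ :=
  ((b w).coord k).toAffineMap.comp (AffineMap.lineMap v₀ v₁)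

@[simp]
theorem segmentCoord_apply (v₀ v₁ : V) (w : ι → Bool) (k : ι) (t : ℝ) :
    segmentCoord b v₀ v₁ w k t = (b w).repr (AffineMap.lineMap v₀ v₁ t) k :=
  rfl

variable [Fintype ι]

open Classical in
noncomputable def coneCount (b : (ι → Bool) → Module.Basis ι ℝ V) (v : V) : ℕ :=
  #{w | ∀ k, 0 < (b w).repr v k}

variable [DecidableEq ι] {x : ι → Bool → V}

theorem repr_update_eq_of_repr_eq_zero (hb : ∀ w k, b w k = x k (w k)) {w : ι → Bool} {v : V}
    {i : ι} (hv : (b w).repr v i = 0) (s : Bool) (k : ι) :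
    (b (update w i s)).repr v k = (b w).repr v k := by
  have hsum : v = ∑ k, (b w).repr v k • b (update w i s) k := by
    conv_lhs => rw [← (b w).sum_repr v]
    refine Finset.sum_congr rfl fun k _ => ?_
    rcases eq_or_ne k i with rfl | hk
    · simp [hv]
    · rw [hb, hb, update_of_ne hk]
  conv_lhs => rw [hsum]
  rw [(b _).repr_sum_self]

theorem crossesFacet_segmentCoord_update (hb : ∀ w k, b w k = x k (w k)) {v₀ v₁ : V}
    {w : ι → Bool} {i : ι} (s : Bool) (h : CrossesFacet (segmentCoord b v₀ v₁ w) 0 1 i) :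
    CrossesFacet (segmentCoord b v₀ v₁ (update w i s)) 0 1 i := by
  obtain ⟨t, ht, h0, hpos⟩ := h
  have hrepr := repr_update_eq_of_repr_eq_zero hb (by simpa using h0) s
  exact ⟨t, ht, by simpa [hrepr] using h0, fun j hj => by simpa [hrepr] using hpos j hj⟩

theorem crossesFacet_segmentCoord_update_iff (hb : ∀ w k, b w k = x k (w k)) {v₀ v₁ : V}
    {w : ι → Bool} {i : ι} (s : Bool) :
    CrossesFacet (segmentCoord b v₀ v₁ (update w i s)) 0 1 i ↔
      CrossesFacet (segmentCoord b v₀ v₁ w) 0 1 i := by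
  refine ⟨fun h => ?_, crossesFacet_segmentCoord_update hb s⟩
  simpa using crossesFacet_segmentCoord_update hb (w i) h

theorem cast_coneCount_eq_of_segment (hb : ∀ w k, b w k = x k (w k)) {v₀ v₁ : V}
    (h₀ : ∀ w k, (b w).repr v₀ k ≠ 0) (h₁ : ∀ w k, (b w).repr v₁ k ≠ 0)
    (hsimple : ∀ t ∈ Ioo (0 : ℝ) 1, ∀ w i j, (b w).repr (AffineMap.lineMap v₀ v₁ t) i = 0 →
      (b w).repr (AffineMap.lineMap v₀ v₁ t) j = 0 → i = j) :
    (coneCount b v₀ : ZMod 2) = coneCount b v₁ := by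
  classical
  have hcross (w : ι → Bool) :
      ((if ∀ k, 0 < (b w).repr v₀ k then 1 else 0) + (if ∀ k, 0 < (b w).repr v₁ k then 1 else 0) :
        ZMod 2) = #{i | CrossesFacet (segmentCoord b v₀ v₁ w) 0 1 i} := by
    simpa using parity_eq_card_crossesFacet (f := segmentCoord b v₀ v₁ w) zero_le_one
      (by simpa using h₀ w) (by simpa using h₁ w) (by simpa using fun t ht => hsimple t ht w)
  have heven (i : ι) :
      ∑ w, (if CrossesFacet (segmentCoord b v₀ v₁ w) 0 1 i then 1 else 0 : ZMod 2) = 0 :=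
    Finset.sum_involution (fun w _ => update w i (!w i))
      (fun w _ => by
        rw [if_congr (crossesFacet_segmentCoord_update_iff hb _) rfl rfl,
          CharTwo.add_self_eq_zero])
      (fun w _ _ h => by simpa using congrFun h i)
      (fun _ _ => Finset.mem_univ _)
      (fun w _ => by simp)
  rw [← CharTwo.add_eq_zero, coneCount, coneCount, Finset.natCast_card_filter,
    Finset.natCast_card_filter, ← Finset.sum_add_distrib]
  simp only [hcross, Finset.natCast_card_filter]
  rw [Finset.sum_comm]
  exact Finset.sum_eq_zero fun i _ => by convert heven i

end OctahedralFan

section ConvexHull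

variable {R ι E : Type*} [Field R] [LinearOrder R] [IsStrictOrderedRing R] [AddCommGroup E]
  [Module R E] [Fintype ι]

theorem mem_convexHull_range_iff {z : ι → E} {y : E} :
    y ∈ convexHull R (range z) ↔
      ∃ w : ι → R, (∀ i, 0 ≤ w i) ∧ ∑ i, w i = 1 ∧ ∑ i, w i • z i = y := by
  classical
  constructor
  · rw [convexHull_range_eq_exists_affineCombination]
    rintro ⟨s, w, hw₀, hw₁, rfl⟩
    refine ⟨fun i => if i ∈ s then w i else 0, fun i => ?_, ?_, ?_⟩
    · by_cases h : i ∈ s <;> simp [h, hw₀ i]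
    · rw [Finset.sum_ite_mem, Finset.univ_inter, hw₁]
    · simp [s.affineCombination_eq_linear_combination z w hw₁, ite_smul, Finset.sum_ite_mem]
  · rintro ⟨w, hw₀, hw₁, rfl⟩
    exact mem_convexHull_of_exists_fintype w z hw₀ hw₁ (fun i => mem_range_self i) rfl

theorem zero_notMem_convexHull_of_linearIndependent {T : Finset E}
    (hT : LinearIndependent R (fun y : T => (y : E))) : (0 : E) ∉ convexHull R (T : Set E) := by
  have hrange : (T : Set E) = range (fun y : T => (y : E)) := by ext; simp
  rw [hrange, mem_convexHull_range_iff]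
  rintro ⟨w, -, hw₁, hsum⟩
  simp [Fintype.linearIndependent_iff.mp hT w hsum] at hw₁

theorem zero_mem_convexHull_insert_range_iff (b : Module.Basis ι R E) {p : E}
    (hp : ∀ k, b.repr p k ≠ 0) :
    (0 : E) ∈ convexHull R (insert p (range b)) ↔ ∀ k, 0 < b.repr (-p) k := by
  rw [← Option.range_elim, mem_convexHull_range_iff]
  simp only [Fintype.sum_option, Option.elim_none, Option.elim_some, map_neg, Finsupp.neg_apply,
    neg_pos]
  constructor
  · rintro ⟨w, hw₀, hw₁, hsum⟩ k
    have hcoord : w none * b.repr p k + w (some k) = 0 := by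
      have := congrArg (fun v => b.repr v k) hsum
      simp only [map_add, Finsupp.add_apply, b.repr_sum_self, map_smul, Finsupp.smul_apply,
        smul_eq_mul, map_zero, Finsupp.zero_apply] at this
      exact this
    have hpos : 0 < w none := by
      refine (hw₀ none).lt_of_ne' fun h0 => ?_
      rw [h0, zero_smul, zero_add] at hsum
      have := Fintype.linearIndependent_iff.mp b.linearIndependent _ hsum
      simp [h0, this] at hw₁
    exact (hp k).lt_of_le (by nlinarith [hw₀ (some k)])
  · intro hneg
    set s := 1 + ∑ k, -b.repr p k
    have hs : 0 < s := by
      have := Finset.sum_nonneg fun k (_ : k ∈ Finset.univ) => (neg_pos.mpr (hneg k)).le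
      linarith
    refine ⟨fun o => o.elim s⁻¹ fun k => -b.repr p k / s, fun o => ?_, ?_, ?_⟩
    · cases o
      exacts [(inv_pos.mpr hs).le, div_nonneg (neg_pos.mpr (hneg _)).le hs.le]
    · simp only [Option.elim_none, Option.elim_some, ← Finset.sum_div]
      field_simp
      rfl
    · simp only [Option.elim_none, Option.elim_some, div_eq_inv_mul, mul_smul, ← Finset.smul_sum,
        ← smul_add, neg_smul, Finset.sum_neg_distrib, b.sum_repr, add_neg_cancel, smul_zero]

end ConvexHull

theorem Function.Injective.update_of_forall_ne {α β : Type*} [DecidableEq α] {f : α → β}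
    (hf : Injective f) (a : α) {c : β} (hc : ∀ a' ≠ a, f a' ≠ c) : Injective (update f a c) := by
  intro a₁ a₂ h
  rcases eq_or_ne a₁ a with rfl | h₁ <;> rcases eq_or_ne a₂ a₁ with rfl | h₂
  · rfl
  · simp only [update_self, update_of_ne h₂] at h
    exact absurd h.symm (hc a₂ h₂)
  · rfl
  · rcases eq_or_ne a₂ a with rfl | h₃
    · simp only [update_self, update_of_ne h₁] at h
      exact absurd h (hc a₁ h₁)
    · simpa [update_of_ne h₁, update_of_ne h₃] using hf (by simpa [h₁, h₃] using h)

namespace Module.Basis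

variable {ι R M : Type*} [Fintype ι] [Ring R] [AddCommGroup M] [Module R M]

theorem eq_zero_of_repr_sum_eq_zero (b : Basis ι R M) {y : ι → M} (hy : LinearIndependent R y)
    {s : Finset ι} (hys : ∀ k ∉ s, y k = b k) {c : ι → R}
    (hc : ∀ k ∈ s, b.repr (∑ j ∈ s, c j • y j) k = 0) : ∀ k ∈ s, c k = 0 := by
  classical
  set v := ∑ j ∈ s, c j • y j
  have hv : v = ∑ k, (if k ∈ s then 0 else b.repr v k) • y k := by
    conv_lhs => rw [← b.sum_repr v]
    refine Finset.sum_congr rfl fun k _ => ?_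
    by_cases hk : k ∈ s
    · simp [hk, hc k hk]
    · simp [hk, hys k hk]
  have hrel : ∑ k, (if k ∈ s then c k else -b.repr v k) • y k = 0 := by
    have hv' : v = ∑ k, (if k ∈ s then c k else 0) • y k := by
      simp [v, ite_smul, Finset.sum_ite_mem]
    rw [← sub_eq_zero.mpr (hv'.symm.trans hv), ← Finset.sum_sub_distrib]
    refine Finset.sum_congr rfl fun k _ => ?_
    by_cases hk : k ∈ s <;> simp [hk]
  intro k hk
  simpa [hk] using Fintype.linearIndependent_iff.mp hy _ hrel k

end Module.Basis

def InGeneralPosition {α V : Type*} [AddCommGroup V] [Module ℝ V] (n : ℕ) (x : α → V) : Prop :=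
  ∀ y : Fin n → α, Injective y → LinearIndependent ℝ (x ∘ y)

section Apex

open Module

variable {V : Type*} [AddCommGroup V] [Module ℝ V] [FiniteDimensional ℝ V] {d : ℕ}
  {x : Fin (d + 1) × Bool → V}

theorem injective_succ_prod (w : Fin d → Bool) :
    Injective fun k => ((k.succ, w k) : Fin (d + 1) × Bool) :=
  fun _ _ h => Fin.succ_injective _ (Prod.ext_iff.mp h).1

noncomputable def selectionBasis (hV : finrank ℝ V = d) (hx : InGeneralPosition d x)
    (w : Fin d → Bool) : Basis (Fin d) ℝ V :=
  Basis.mk (hx _ (injective_succ_prod w))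
    ((hx _ (injective_succ_prod w)).span_eq_top_of_card_eq_finrank' (by simp [hV])).ge

theorem selectionBasis_apply (hV : finrank ℝ V = d) (hx : InGeneralPosition d x)
    (w : Fin d → Bool) (k : Fin d) : selectionBasis hV hx w k = x (k.succ, w k) :=
  Basis.mk_apply _ _ _

theorem repr_apex_ne_zero (hV : finrank ℝ V = d) (hx : InGeneralPosition d x)
    (w : Fin d → Bool) (a : Bool) (k : Fin d) : (selectionBasis hV hx w).repr (x (0, a)) k ≠ 0 := by
  intro h0
  have hinj := (injective_succ_prod w).update_of_forall_ne k (c := (0, a))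
    fun _ _ h => Fin.succ_ne_zero _ (Prod.ext_iff.mp h).1
  have := (selectionBasis hV hx w).eq_zero_of_repr_sum_eq_zero (hx _ hinj) (s := {k})
    (fun j hj => by simp [update_of_ne (Finset.notMem_singleton.mp hj), selectionBasis_apply])
    (c := fun _ => 1) (by simpa using h0) k (Finset.mem_singleton_self k)
  exact one_ne_zero this

theorem repr_lineMap_apex_ne_zero_or_ne_zero (hV : finrank ℝ V = d) (hx : InGeneralPosition d x)
    (w : Fin d → Bool) {t : ℝ} (ht : t ∈ Ioo (0 : ℝ) 1) {i j : Fin d} (hij : i ≠ j) :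
    (selectionBasis hV hx w).repr (AffineMap.lineMap (x (0, true)) (x (0, false)) t) i ≠ 0 ∨
      (selectionBasis hV hx w).repr (AffineMap.lineMap (x (0, true)) (x (0, false)) t) j ≠ 0 := by
  by_contra! h
  have hinj₁ := (injective_succ_prod w).update_of_forall_ne i (c := (0, true))
    fun _ _ h => Fin.succ_ne_zero _ (Prod.ext_iff.mp h).1
  have hinj₂ := hinj₁.update_of_forall_ne j (c := (0, false)) fun l hl h => by
    rcases eq_or_ne l i with rfl | hli
    · simp at h
    · simp [update_of_ne hli] at h
  have := (selectionBasis hV hx w).eq_zero_of_repr_sum_eq_zero (hx _ hinj₂) (s := {i, j})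
    (fun l hl => by
      simp only [Finset.mem_insert, Finset.mem_singleton, not_or] at hl
      simp [update_of_ne hl.1, update_of_ne hl.2, selectionBasis_apply])
    (c := fun l => if l = i then 1 - t else t)
    (by
      simp only [Finset.mem_insert, Finset.mem_singleton, forall_eq_or_imp, forall_eq]
      simpa [Finset.sum_pair hij, hij, hij.symm, update_of_ne hij.symm,
        AffineMap.lineMap_apply_module] using h) i (by simp)
  simp only [ite_true, sub_eq_zero] at this
  exact ht.2.ne' this

theorem zero_mem_convexHull_cons_iff (hV : finrank ℝ V = d) (hx : InGeneralPosition d x)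
    (a : Bool) (w : Fin d → Bool) :
    (0 : V) ∈ convexHull ℝ (range fun c => x (c, (Fin.cons a w : Fin (d + 1) → Bool) c)) ↔
      ∀ k, 0 < (selectionBasis hV hx w).repr (-x (0, a)) k := by
  have hrange : (range fun c => x (c, (Fin.cons a w : Fin (d + 1) → Bool) c)) =
      insert (x (0, a)) (range (selectionBasis hV hx w)) := by
    rw [← Fin.range_cons]
    congr 1
    ext c
    refine Fin.cases ?_ (fun k => ?_) c <;> simp [selectionBasis_apply]
  rw [hrange, zero_mem_convexHull_insert_range_iff _ (repr_apex_ne_zero hV hx w a)]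

theorem cast_coneCount_neg_apex_eq (hV : finrank ℝ V = d) (hx : InGeneralPosition d x) :
    (coneCount (selectionBasis hV hx) (-x (0, true)) : ZMod 2) =
      coneCount (selectionBasis hV hx) (-x (0, false)) := by
  refine cast_coneCount_eq_of_segment (x := fun k a => x (k.succ, a)) (selectionBasis_apply hV hx)
    (fun w k => by simpa using repr_apex_ne_zero hV hx w true k)
    (fun w k => by simpa using repr_apex_ne_zero hV hx w false k)
    fun t ht w i j hi hj => ?_
  by_contra hij
  have hneg : AffineMap.lineMap (-x (0, true)) (-x (0, false)) t =
      -AffineMap.lineMap (x (0, true)) (x (0, false)) t := by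
    simp only [AffineMap.lineMap_apply_module, smul_neg, neg_add]
  rw [hneg, map_neg, Finsupp.neg_apply, neg_eq_zero] at hi hj
  exact (repr_lineMap_apex_ne_zero_or_ne_zero hV hx w ht hij).elim (· hi) (· hj)

open Classical in
theorem even_card_zero_mem_convexHull_selection (hV : finrank ℝ V = d)
    (hx : InGeneralPosition d x) :
    Even #{ε : Fin (d + 1) → Bool | (0 : V) ∈ convexHull ℝ (range fun c => x (c, ε c))} := by
  have hcount : #{ε : Fin (d + 1) → Bool | (0 : V) ∈ convexHull ℝ (range fun c => x (c, ε c))} =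
      coneCount (selectionBasis hV hx) (-x (0, true)) +
        coneCount (selectionBasis hV hx) (-x (0, false)) := by
    rw [Finset.card_filter, ← (Fin.consEquiv fun _ => Bool).sum_comp, Fintype.sum_prod_type,
      Fintype.sum_bool]
    simp only [Fin.consEquiv, Equiv.coe_fn_mk, zero_mem_convexHull_cons_iff hV hx, coneCount,
      Finset.card_filter]
    congr!
  rw [← ZMod.natCast_eq_zero_iff_even, hcount, Nat.cast_add, cast_coneCount_neg_apex_eq hV hx,
    CharTwo.add_self_eq_zero]

end Apex

section Colorful

variable {ι α V : Type*}

section LinearIndependent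

variable [AddCommGroup V] [Module ℝ V]

theorem InGeneralPosition.of_forall_finset {n : ℕ} {x : α → V} (hx : Injective x)
    (hgen : ∀ T : Finset V, (T : Set V) ⊆ range x → #T = n →
      LinearIndependent ℝ (fun y : T => (y : V))) : InGeneralPosition n x := by
  classical
  intro y hy
  set T := Finset.univ.image (x ∘ y)
  have hmem (k : Fin n) : x (y k) ∈ T := Finset.mem_image_of_mem _ (Finset.mem_univ k)
  have hT := hgen T (by
    rw [Finset.coe_image, Finset.coe_univ, image_univ]
    exact range_comp_subset_range y x)
    (by rw [Finset.card_image_of_injective _ (hx.comp hy), Finset.card_univ, Fintype.card_fin])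
  exact hT.comp (fun k => ⟨x (y k), hmem k⟩) fun k l h => hx.comp hy (congrArg Subtype.val h)

theorem linearIndependent_of_card_le {U : Finset V} {n : ℕ}
    (hgen : ∀ T : Finset V, T ⊆ U → #T = n → LinearIndependent ℝ (fun y : T => (y : V)))
    (hn : n ≤ #U) {T : Finset V} (hTU : T ⊆ U) (hTn : #T ≤ n) :
    LinearIndependent ℝ (fun y : T => (y : V)) := by
  obtain ⟨T', hTT', hT'U, hT'n⟩ := Finset.exists_subsuperset_card_eq hTU hTn hn
  exact LinearIndepOn.mono (v := id) (hgen T' hT'U hT'n) (Finset.coe_subset.mpr hTT')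

end LinearIndependent

variable [DecidableEq V] {S : ι → Finset V} {x : ι × Bool → V}

theorem exists_injective_pairing (hcard : ∀ i, #(S i) = 2)
    (hdisj : ∀ i j, i ≠ j → Disjoint (S i) (S j)) :
    ∃ x : ι × Bool → V, (∀ i, S i = {x (i, true), x (i, false)}) ∧ Injective x := by
  choose a b hab hS using fun i => Finset.card_eq_two.mp (hcard i)
  refine ⟨fun p => bif p.2 then a p.1 else b p.1, fun i => hS i, ?_⟩
  have hmem (p : ι × Bool) : (bif p.2 then a p.1 else b p.1) ∈ S p.1 := by
    cases p.2 <;> simp [hS]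
  rintro ⟨i, s⟩ ⟨j, t⟩ h
  have hi := hmem (i, s)
  have hj := hmem (j, t)
  dsimp only at h hi hj
  obtain rfl : i = j := by
    by_contra hij
    exact Finset.disjoint_left.mp (hdisj i j hij) hi (h ▸ hj)
  cases s <;> cases t <;> simp_all [eq_comm]

variable [Fintype ι]

theorem exists_eq_image_selection (hS : ∀ i, S i = {x (i, true), x (i, false)}) {T : Finset V}
    (hTS : (T : Set V) ⊆ ⋃ i, (S i : Set V)) (hcol : ∀ i, #(T ∩ S i) ≤ 1)
    (hT : Fintype.card ι ≤ #T) : ∃ ε : ι → Bool, T = Finset.univ.image fun i => x (i, ε i) := by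
  classical
  have hne (i : ι) : (T ∩ S i).Nonempty := by
    by_contra hempty
    have hcover : T ⊆ Finset.univ.biUnion fun j => T ∩ S j := fun y hy => by
      obtain ⟨j, hj⟩ := mem_iUnion.mp (hTS hy)
      exact Finset.mem_biUnion.mpr ⟨j, Finset.mem_univ j, Finset.mem_inter.mpr ⟨hy, hj⟩⟩
    have : #T ≤ Fintype.card ι - 1 := calc
      #T ≤ ∑ j, #(T ∩ S j) := (Finset.card_le_card hcover).trans Finset.card_biUnion_le
      _ = ∑ j ∈ Finset.univ.erase i, #(T ∩ S j) := by
        rw [← Finset.sum_erase_add _ _ (Finset.mem_univ i),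
          Finset.not_nonempty_iff_eq_empty.mp hempty, Finset.card_empty, add_zero]
      _ ≤ ∑ j ∈ Finset.univ.erase i, 1 := Finset.sum_le_sum fun j _ => hcol j
      _ = Fintype.card ι - 1 := by simp [Finset.card_erase_of_mem]
    have : 0 < Fintype.card ι := Fintype.card_pos_iff.mpr ⟨i⟩
    omega
  have hsel (i : ι) : ∃ s, x (i, s) ∈ T := by
    obtain ⟨y, hy⟩ := hne i
    rw [Finset.mem_inter, hS, Finset.mem_insert, Finset.mem_singleton] at hy
    rcases hy with ⟨hyT, rfl | rfl⟩
    exacts [⟨true, hyT⟩, ⟨false, hyT⟩]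
  choose ε hε using hsel
  refine ⟨ε, Finset.Subset.antisymm (fun y hy => ?_) (Finset.image_subset_iff.mpr fun i _ => hε i)⟩
  obtain ⟨i, hi⟩ := mem_iUnion.mp (hTS hy)
  have hxi : x (i, ε i) ∈ T ∩ S i := Finset.mem_inter.mpr ⟨hε i, by rw [hS]; cases ε i <;> simp⟩
  rw [Finset.card_le_one.mp (hcol i) y (Finset.mem_inter.mpr ⟨hy, hi⟩) _ hxi]
  exact Finset.mem_image_of_mem _ (Finset.mem_univ i)

theorem card_image_selection_inter_le_one (hS : ∀ i, S i = {x (i, true), x (i, false)})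
    (hdisj : ∀ i j, i ≠ j → Disjoint (S i) (S j)) (ε : ι → Bool) (i : ι) :
    #((Finset.univ.image fun j => x (j, ε j)) ∩ S i) ≤ 1 := by
  have hmem (j : ι) : x (j, ε j) ∈ S j := by rw [hS]; cases ε j <;> simp
  refine Finset.card_le_one.mpr fun y hy z hz => ?_
  simp only [Finset.mem_inter, Finset.mem_image, Finset.mem_univ, true_and] at hy hz
  obtain ⟨⟨j, rfl⟩, hyi⟩ := hy
  obtain ⟨⟨k, rfl⟩, hzi⟩ := hz
  have hsame (l : ι) (hl : x (l, ε l) ∈ S i) : l = i := by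
    by_contra hli
    exact Finset.disjoint_left.mp (hdisj l i hli) (hmem l) hl
  rw [hsame j hyi, hsame k hzi]

theorem injective_image_selection (hx : Injective x) :
    Injective fun ε : ι → Bool => Finset.univ.image fun i => x (i, ε i) := by
  intro ε ε' h
  funext i
  have hi : x (i, ε i) ∈ Finset.univ.image fun j => x (j, ε' j) := by
    dsimp only at h
    exact h ▸ Finset.mem_image_of_mem _ (Finset.mem_univ i)
  obtain ⟨j, -, hj⟩ := Finset.mem_image.mp hi
  obtain ⟨rfl, hji⟩ := Prod.ext_iff.mp (hx hj)
  exact hji.symm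

theorem setOf_colorful_zero_mem_convexHull_eq_image [AddCommGroup V] [Module ℝ V]
    (hS : ∀ i, S i = {x (i, true), x (i, false)}) (hdisj : ∀ i j, i ≠ j → Disjoint (S i) (S j))
    (hsmall : ∀ T : Finset V, (T : Set V) ⊆ ⋃ i, (S i : Set V) → #T < Fintype.card ι →
      (0 : V) ∉ convexHull ℝ (T : Set V)) :
    {T : Finset V | (T : Set V) ⊆ ⋃ i, (S i : Set V) ∧ (∀ i, #(T ∩ S i) ≤ 1) ∧
        (0 : V) ∈ convexHull ℝ (T : Set V)} =
      (fun ε : ι → Bool => Finset.univ.image fun i => x (i, ε i)) ''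
        {ε | (0 : V) ∈ convexHull ℝ (range fun i => x (i, ε i))} := by
  ext T
  constructor
  · rintro ⟨hTS, hcol, h0⟩
    obtain ⟨ε, rfl⟩ := exists_eq_image_selection hS hTS hcol
      (not_lt.mp fun hlt => hsmall T hTS hlt h0)
    exact ⟨ε, by simpa using h0, rfl⟩
  · rintro ⟨ε, h0, rfl⟩
    refine ⟨?_, card_image_selection_inter_le_one hS hdisj ε, by simpa using h0⟩
    intro y hy
    obtain ⟨i, -, rfl⟩ := Finset.mem_image.mp hy
    exact mem_iUnion.mpr ⟨i, by rw [Finset.mem_coe, hS]; cases ε i <;> simp⟩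

end Colorful

theorem octahedron_lemma_general (d : ℕ)
    (S : Fin (d + 1) → Finset (Fin d → ℝ))
    (hcard : ∀ i, (S i).card = 2)
    (hdisj : ∀ i j, i ≠ j → Disjoint (S i) (S j))
    (hgen : ∀ T : Finset (Fin d → ℝ),
      (T : Set (Fin d → ℝ)) ⊆ (⋃ i, (S i : Set (Fin d → ℝ))) → T.card = d →
      LinearIndependent ℝ (fun x : T => (x : Fin d → ℝ))) :
    Even {T : Finset (Fin d → ℝ) |
      (T : Set (Fin d → ℝ)) ⊆ (⋃ i, (S i : Set (Fin d → ℝ))) ∧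
      (∀ i, (T ∩ S i).card ≤ 1) ∧
      (0 : Fin d → ℝ) ∈ convexHull ℝ (T : Set (Fin d → ℝ))}.ncard := by
  classical
  obtain ⟨x, hS, hx⟩ := exists_injective_pairing hcard hdisj
  have hU : (⋃ i, (S i : Set (Fin d → ℝ))) = range x := by
    ext y
    simp [hS, Prod.exists, Bool.exists_bool, or_comm, eq_comm]
  have hsmall (T : Finset (Fin d → ℝ)) (hT : (T : Set (Fin d → ℝ)) ⊆ ⋃ i, (S i : Set _))
      (hTd : #T < Fintype.card (Fin (d + 1))) : (0 : Fin d → ℝ) ∉ convexHull ℝ (T : Set _) := by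
    refine zero_notMem_convexHull_of_linearIndependent (linearIndependent_of_card_le
      (U := Finset.univ.image x) (fun T' hT' => hgen T' ?_) ?_ ?_ ?_)
    · simpa [hU] using Finset.coe_subset.mpr hT'
    · rw [Finset.card_image_of_injective _ hx, Finset.card_univ, Fintype.card_prod,
        Fintype.card_fin, Fintype.card_bool]
      omega
    · simpa [← Finset.coe_subset, hU] using hT
    · simp only [Fintype.card_fin] at hTd
      omega
  rw [setOf_colorful_zero_mem_convexHull_eq_image hS hdisj hsmall,
    Set.ncard_image_of_injective _ (injective_image_selection hx), ← Finset.coe_filter_univ,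
    Set.ncard_coe_finset]
  exact even_card_zero_mem_convexHull_selection (Module.finrank_fin_fun ℝ)
    (.of_forall_finset hx (hU ▸ hgen))

/-- **The Octahedron lemma.** Given `d+1` pairwise disjoint two-element sets of points in
`ℝ^d` whose union is in general position with respect to the origin (every `d` of the points
are linearly independent), the number of positively dependent colorful sets is even. -/
theorem octahedron_lemma (d : ℕ) (hd : 0 < d)
    (S : Fin (d + 1) → Finset (Fin d → ℝ))
    (hcard : ∀ i, (S i).card = 2)
    (hdisj : ∀ i j, i ≠ j → Disjoint (S i) (S j))
    (hgen : ∀ T : Finset (Fin d → ℝ),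
      (T : Set (Fin d → ℝ)) ⊆ (⋃ i, (S i : Set (Fin d → ℝ))) → T.card = d →
      LinearIndependent ℝ (fun x : T => (x : Fin d → ℝ))) :
    Even {T : Finset (Fin d → ℝ) |
      (T : Set (Fin d → ℝ)) ⊆ (⋃ i, (S i : Set (Fin d → ℝ))) ∧
      (∀ i, (T ∩ S i).card ≤ 1) ∧
      (0 : Fin d → ℝ) ∈ convexHull ℝ (T : Set (Fin d → ℝ))}.ncard :=
  octahedron_lemma_general d S hcard hdisj hgen
end

section
/- Let d be a positive integer and let S_1, ..., S_{d+1} be pairwise disjoint two-element sets of points in ℝ^d such that every d-element subset of ⋃_{i=1}^{d+1} S_i is linearly independent. Suppose T_0 ⊆ ⋃_{i=1}^{d+1} S_i is a colorful set (|T_0 ∩ S_i| ≤ 1 for all i) with 0 in the convex hull of T_0. Then there exists a colorful set T ⊆ ⋃_{i=1}^{d+1} S_i with T ≠ T_0 and 0 in the convex hull of T. -/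
/-!
Path following. Let `U = ⋃ Sᵢ` and call a set of `d + 1` points of `U` *almost colourful* if it
contains `0` in its convex hull and meets every `Sᵢ` with `i ≠ 0` at most once. For `d + 2`
points `W` of `U` in general position, the convex weights expressing `0` through `W` form a
segment each of whose endpoints vanishes at exactly one point; hence if one facet `W \ {q}`
contains `0` in its hull, exactly one other facet does. Joining two almost colourful simplices
whose union has `d + 2` points and is still colourful outside `S₀` gives a graph in which the
degree of `X` is `#(S₀ \ X)` plus twice the number of colours `i ≠ 0` missed by `X`. So the
odd-degree vertices are exactly the colourful simplices, and the handshake lemma yields a second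
one besides `T₀`.
-/

open Finset Function

variable {E : Type*} [AddCommGroup E] [Module ℝ E]

def IsZeroWeight (W : Finset E) (w : E → ℝ) : Prop :=
  (∀ x ∈ W, 0 ≤ w x) ∧ ∑ x ∈ W, w x = 1 ∧ ∑ x ∈ W, w x • x = 0

lemma zero_mem_convexHull_iff {W : Finset E} :
    (0 : E) ∈ convexHull ℝ (W : Set E) ↔ ∃ w, IsZeroWeight W w :=
  Finset.mem_convexHull'

lemma zero_mem_convexHull_erase_iff [DecidableEq E] {W : Finset E} {q : E} (hq : q ∈ W) :
    (0 : E) ∈ convexHull ℝ (W.erase q : Set E) ↔ ∃ w, IsZeroWeight W w ∧ w q = 0 := by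
  rw [zero_mem_convexHull_iff]
  constructor
  · rintro ⟨w, hw₀, hw₁, hw⟩
    have hupd : ∀ x ∈ W.erase q, update w q 0 x = w x := fun x hx =>
      update_of_ne (ne_of_mem_erase hx) _ _
    refine ⟨update w q 0, ⟨fun x hx => ?_, ?_, ?_⟩, by simp⟩
    · rcases eq_or_ne x q with rfl | hxq
      · simp
      · rw [update_of_ne hxq]; exact hw₀ x (mem_erase.2 ⟨hxq, hx⟩)
    · rw [← sum_erase_add _ _ hq, sum_congr rfl hupd, hw₁]; simp
    · rw [← sum_erase_add _ _ hq, sum_congr rfl fun x hx => by rw [hupd x hx], hw]; simp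
  · rintro ⟨w, ⟨hw₀, hw₁, hw⟩, hwq⟩
    exact ⟨w, fun x hx => hw₀ x (mem_of_mem_erase hx), by rwa [sum_erase _ hwq],
      by rwa [sum_erase _ (by rw [hwq, zero_smul])]⟩

lemma exists_ratio_test {α : Type*} {s : Finset α} {w ε : α → ℝ} (hw : ∀ x ∈ s, 0 ≤ w x)
    (hε : ∃ x ∈ s, ε x < 0) :
    ∃ t, 0 ≤ t ∧ (∀ x ∈ s, 0 ≤ w x + t * ε x) ∧ ∃ y ∈ s, ε y < 0 ∧ w y + t * ε y = 0 := by
  classical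
  obtain ⟨y, hy, hmin⟩ := exists_min_image (s.filter (ε · < 0)) (fun x => w x / -ε x)
    (by simpa [filter_nonempty_iff] using hε)
  rw [mem_filter] at hy
  refine ⟨w y / -ε y, div_nonneg (hw y hy.1) (by linarith [hy.2]), fun x hx => ?_,
    y, hy.1, hy.2, by field_simp [hy.2.ne]; ring⟩
  rcases le_or_gt 0 (ε x) with hεx | hεx
  · exact add_nonneg (hw x hx) (mul_nonneg (div_nonneg (hw y hy.1) (by linarith [hy.2])) hεx)
  · have := hmin x (mem_filter.2 ⟨hx, hεx⟩)
    rw [le_div_iff₀ (by linarith)] at this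
    linarith

def LinearGeneralPosition (d : ℕ) (U : Finset E) : Prop :=
  ∀ T ⊆ U, #T ≤ d → LinearIndepOn ℝ id (T : Set E)

namespace LinearGeneralPosition

variable {d : ℕ} {U W : Finset E} (hU : LinearGeneralPosition d U)
include hU

lemma eq_zero_of_sum_smul_eq_zero (hW : W ⊆ U) {f : E → ℝ} (hf : ∑ x ∈ W, f x • x = 0)
    (hsupp : #(W.filter (f · ≠ 0)) ≤ d) : ∀ x ∈ W, f x = 0 := by
  classical
  have hT := linearIndepOn_iff'.1 (hU _ ((filter_subset _ _).trans hW) hsupp) _ f subset_rfl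
    (by rwa [sum_filter_of_ne fun x _ hx => left_ne_zero_of_smul hx])
  intro x hx
  by_contra hfx
  exact hfx (hT x (mem_filter.2 ⟨hx, hfx⟩))

lemma lt_card_of_zero_mem_convexHull (hW : W ⊆ U) (h0 : (0 : E) ∈ convexHull ℝ (W : Set E)) :
    d < #W := by
  obtain ⟨w, hw⟩ := zero_mem_convexHull_iff.1 h0
  by_contra! hWd
  refine zero_ne_one (α := ℝ) ?_
  rw [← hw.2.1, sum_eq_zero (hU.eq_zero_of_sum_smul_eq_zero hW hw.2.2
    ((card_filter_le _ _).trans hWd))]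

lemma eq_zero_of_sum_smul_eq_zero_of_eq_zero_of_eq_zero (hW : W ⊆ U) (hWc : #W = d + 2)
    {f : E → ℝ} (hf : ∑ x ∈ W, f x • x = 0) {p q : E} (hp : p ∈ W) (hq : q ∈ W) (hpq : p ≠ q)
    (hfp : f p = 0) (hfq : f q = 0) : ∀ x ∈ W, f x = 0 := by
  classical
  refine hU.eq_zero_of_sum_smul_eq_zero hW hf ?_
  have hsub : W.filter (f · ≠ 0) ⊆ (W.erase p).erase q := fun x hx => by
    obtain ⟨hxW, hfx⟩ := mem_filter.1 hx
    exact mem_erase.2 ⟨fun h => hfx (h ▸ hfq), mem_erase.2 ⟨fun h => hfx (h ▸ hfp), hxW⟩⟩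
  have := card_le_card hsub
  rw [card_erase_of_mem (mem_erase.2 ⟨hpq.symm, hq⟩), card_erase_of_mem hp, hWc] at this
  omega

lemma pos_of_isZeroWeight (hW : W ⊆ U) (hWc : #W = d + 2) {w : E → ℝ} (hw : IsZeroWeight W w)
    {q : E} (hq : q ∈ W) (hwq : w q = 0) : ∀ y ∈ W, y ≠ q → 0 < w y := by
  intro y hy hyq
  refine (hw.1 y hy).lt_of_ne' fun hwy => zero_ne_one (α := ℝ) ?_
  rw [← hw.2.1, sum_eq_zero (hU.eq_zero_of_sum_smul_eq_zero_of_eq_zero_of_eq_zero hW hWc hw.2.2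
    hy hq hyq hwy hwq)]

lemma eq_zero_of_sum_eq_zero_of_sum_smul_eq_zero (hW : W ⊆ U) (hWc : #W = d + 2) {w : E → ℝ}
    (hw : IsZeroWeight W w) {q : E} (hq : q ∈ W) (hwq : w q = 0) {η : E → ℝ}
    (hη₁ : ∑ x ∈ W, η x = 0) (hη : ∑ x ∈ W, η x • x = 0) (hηq : η q = 0) :
    ∀ x ∈ W, η x = 0 := by
  -- The linear relations of `W` vanishing at `q` are the multiples of `w`.
  obtain ⟨y, hy, hwy⟩ := exists_ne_zero_of_sum_ne_zero (hw.2.1 ▸ one_ne_zero : ∑ x ∈ W, w x ≠ 0)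
  set c := η y / w y
  have hprop : ∀ x ∈ W, η x - c * w x = 0 :=
    hU.eq_zero_of_sum_smul_eq_zero_of_eq_zero_of_eq_zero hW hWc
      (by simp [sub_smul, mul_smul, sum_sub_distrib, ← smul_sum, hη, hw.2.2]) hy hq
      (by rintro rfl; exact hwy hwq) (by simp [c, hwy]) (by simp [hηq, hwq])
  have hc : c = 0 := by
    have := sum_congr rfl hprop
    rw [sum_sub_distrib, ← mul_sum, hη₁, hw.2.1] at this
    simpa using this
  intro x hx
  simpa [hc] using hprop x hx

lemma exists_isZeroWeight_eq_zero_ne [FiniteDimensional ℝ E] (hE : Module.finrank ℝ E ≤ d)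
    (hW : W ⊆ U) (hWc : #W = d + 2) {w₀ : E → ℝ} (hw₀ : IsZeroWeight W w₀) {q₀ : E}
    (hq₀ : q₀ ∈ W) (hwq₀ : w₀ q₀ = 0) :
    ∃ q₁ ∈ W, q₁ ≠ q₀ ∧ ∃ w₁, IsZeroWeight W w₁ ∧ w₁ q₁ = 0 := by
  obtain ⟨δ, hδ, hδ₁, x, hx, hδx⟩ :=
    Module.exists_nontrivial_relation_sum_zero_of_finrank_succ_lt_card (R := ℝ) (t := W)
      (by omega)
  have hδq₀ : δ q₀ ≠ 0 := fun h =>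
    hδx (hU.eq_zero_of_sum_eq_zero_of_sum_smul_eq_zero hW hWc hw₀ hq₀ hwq₀ hδ₁ hδ h x hx)
  set ε := fun x => δ x / δ q₀
  have hε₁ : ∑ x ∈ W, ε x = 0 := by simp [ε, ← sum_div, hδ₁]
  have hε : ∑ x ∈ W, ε x • x = 0 := by simp [ε, div_eq_inv_mul, mul_smul, ← smul_sum, hδ]
  have hεq₀ : ε q₀ = 1 := div_self hδq₀
  have hneg : ∃ x ∈ W, ε x < 0 := by
    by_contra! h
    have := (sum_eq_zero_iff_of_nonneg h).1 hε₁ q₀ hq₀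
    linarith
  -- Move from `w₀` along `ε` until a coordinate drops to zero; it is not the one at `q₀`.
  obtain ⟨t, -, ht, q₁, hq₁, hεq₁, htq₁⟩ := exists_ratio_test hw₀.1 hneg
  refine ⟨q₁, hq₁, by rintro rfl; linarith, fun x => w₀ x + t * ε x, ⟨ht, ?_, ?_⟩, htq₁⟩
  · simp [sum_add_distrib, ← mul_sum, hε₁, hw₀.2.1]
  · simp [add_smul, mul_smul, sum_add_distrib, ← smul_sum, hε, hw₀.2.2]

lemma eq_of_isZeroWeight_eq_zero (hW : W ⊆ U) (hWc : #W = d + 2) {q₀ q₁ q₂ : E} (hq₀ : q₀ ∈ W)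
    (hq₁ : q₁ ∈ W) (hq₂ : q₂ ∈ W) (h₁₀ : q₁ ≠ q₀) (h₂₀ : q₂ ≠ q₀) {w₀ w₁ w₂ : E → ℝ}
    (hw₀ : IsZeroWeight W w₀) (hw₁ : IsZeroWeight W w₁) (hw₂ : IsZeroWeight W w₂)
    (hwq₀ : w₀ q₀ = 0) (hwq₁ : w₁ q₁ = 0) (hwq₂ : w₂ q₂ = 0) : q₂ = q₁ := by
  by_contra h₂₁
  have pos := fun {w} (hw : IsZeroWeight W w) {q} (hq : q ∈ W) (hwq : w q = 0) {y} (hy : y ∈ W)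
    (hyq : y ≠ q) => hU.pos_of_isZeroWeight hW hWc hw hq hwq y hy hyq
  have h₁q₀ := pos hw₁ hq₁ hwq₁ hq₀ h₁₀.symm
  have h₂q₀ := pos hw₂ hq₂ hwq₂ hq₀ h₂₀.symm
  have h₀q₁ := pos hw₀ hq₀ hwq₀ hq₁ h₁₀
  have h₂q₁ := pos hw₂ hq₂ hwq₂ hq₁ (Ne.symm h₂₁)
  have h₀q₂ := pos hw₀ hq₀ hwq₀ hq₂ h₂₀
  have h₁q₂ := pos hw₁ hq₁ hwq₁ hq₂ h₂₁
  -- The zero weights of `W` form a segment; `w₂` would lie strictly between `w₀` and `w₁`.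
  set s := w₂ q₀ / w₁ q₀
  have hline := hU.eq_zero_of_sum_eq_zero_of_sum_smul_eq_zero hW hWc hw₀ hq₀ hwq₀
    (η := fun x => w₂ x - w₀ x - s * (w₁ x - w₀ x))
    (by simp [sum_sub_distrib, ← mul_sum, hw₀.2.1, hw₁.2.1, hw₂.2.1])
    (by simp [sub_smul, mul_smul, sum_sub_distrib, ← smul_sum, hw₀.2.2, hw₁.2.2, hw₂.2.2])
    (by simp only [hwq₀, s]; field_simp [h₁q₀.ne']; ring)
  have hs : 0 < s := div_pos h₂q₀ h₁q₀
  have at₁ := hline q₁ hq₁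
  have at₂ := hline q₂ hq₂
  simp only [hwq₁, hwq₂] at at₁ at₂
  have hs₁ : s < 1 := by nlinarith
  nlinarith [mul_pos hs h₁q₂, mul_pos (sub_pos.2 hs₁) h₀q₂]

theorem existsUnique_zero_mem_convexHull_ne [DecidableEq E] [FiniteDimensional ℝ E]
    (hE : Module.finrank ℝ E ≤ d) (hW : W ⊆ U) (hWc : #W = d + 2) {X : Finset E} (hXW : X ⊆ W)
    (hXc : #X = d + 1) (hX : (0 : E) ∈ convexHull ℝ (X : Set E)) :
    ∃! Y, Y ⊆ W ∧ #Y = d + 1 ∧ (0 : E) ∈ convexHull ℝ (Y : Set E) ∧ Y ≠ X := by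
  have eq_erase : ∀ {Y}, Y ⊆ W → #Y = d + 1 → ∃ p ∈ W, Y = W.erase p := fun hYW hYc => by
    obtain ⟨p, hp, rfl⟩ := exists_eq_insert_iff.2 ⟨hYW, by omega⟩
    exact ⟨p, mem_insert_self _ _, (erase_insert hp).symm⟩
  obtain ⟨q₀, hq₀, rfl⟩ := eq_erase hXW hXc
  obtain ⟨w₀, hw₀, hwq₀⟩ := (zero_mem_convexHull_erase_iff hq₀).1 hX
  obtain ⟨q₁, hq₁, h₁₀, w₁, hw₁, hwq₁⟩ :=
    hU.exists_isZeroWeight_eq_zero_ne hE hW hWc hw₀ hq₀ hwq₀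
  refine ⟨W.erase q₁, ⟨erase_subset _ _, by rw [card_erase_of_mem hq₁]; omega,
    (zero_mem_convexHull_erase_iff hq₁).2 ⟨w₁, hw₁, hwq₁⟩, by rwa [Ne, erase_inj _ hq₁]⟩, ?_⟩
  rintro _ ⟨hYW, hYc, hY, hYX⟩
  obtain ⟨q₂, hq₂, rfl⟩ := eq_erase hYW hYc
  obtain ⟨w₂, hw₂, hwq₂⟩ := (zero_mem_convexHull_erase_iff hq₂).1 hY
  rw [hU.eq_of_isZeroWeight_eq_zero hW hWc hq₀ hq₁ hq₂ h₁₀ (by rintro rfl; exact hYX rfl)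
    hw₀ hw₁ hw₂ hwq₀ hwq₁ hwq₂]

end LinearGeneralPosition

section Colorings

variable {ι F : Type*} [DecidableEq F]

def IsColorfulExcept (S : ι → Finset F) (i₀ : ι) (X : Finset F) : Prop :=
  ∀ i ≠ i₀, #(X ∩ S i) ≤ 1

instance [Fintype ι] [DecidableEq ι] (S : ι → Finset F) (i₀ : ι) :
    DecidablePred (IsColorfulExcept S i₀) := fun X =>
  inferInstanceAs (Decidable (∀ i ≠ i₀, #(X ∩ S i) ≤ 1))

def pivots [Fintype ι] [DecidableEq ι] (S : ι → Finset F) (i₀ : ι) (X : Finset F) : Finset F :=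
  (univ.biUnion S \ X).filter fun q => IsColorfulExcept S i₀ (insert q X)

variable {S : ι → Finset F} {i₀ : ι} {X Y : Finset F}

lemma IsColorfulExcept.mono (hX : IsColorfulExcept S i₀ X) (hYX : Y ⊆ X) :
    IsColorfulExcept S i₀ Y := fun i hi =>
  (card_le_card (inter_subset_inter_right hYX)).trans (hX i hi)

variable (hS : Pairwise (Disjoint on S))
include hS

lemma isColorfulExcept_insert_iff (hX : IsColorfulExcept S i₀ X) {q : F} (hqX : q ∉ X) {c : ι}
    (hq : q ∈ S c) : IsColorfulExcept S i₀ (insert q X) ↔ c = i₀ ∨ Disjoint X (S c) := by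
  constructor
  · intro h
    refine or_iff_not_imp_left.2 fun hc => disjoint_iff_inter_eq_empty.2 (card_eq_zero.1 ?_)
    have := h c hc
    rw [insert_inter_of_mem hq, card_insert_of_notMem fun h => hqX (mem_inter.1 h).1] at this
    omega
  · intro h i hi
    rcases eq_or_ne i c with rfl | hic
    · rw [insert_inter_of_mem hq, disjoint_iff_inter_eq_empty.1 (h.resolve_left hi)]
      simp
    · rw [insert_inter_of_notMem fun hqi => disjoint_left.1 (hS hic) hqi hq]
      exact hX i hi

variable [Fintype ι]

lemma card_eq_sum_card_inter (hX : X ⊆ univ.biUnion S) : #X = ∑ i, #(X ∩ S i) := by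
  rw [← card_biUnion fun i _ j _ hij => (hS hij).mono inter_subset_right inter_subset_right,
    ← inter_biUnion, inter_eq_left.2 hX]

lemma card_inter_eq_one_of_colorful (hX : X ⊆ univ.biUnion S) (hcol : ∀ i, #(X ∩ S i) ≤ 1)
    (hc : Fintype.card ι ≤ #X) : #X = Fintype.card ι ∧ ∀ i, #(X ∩ S i) = 1 := by
  have hsum := card_eq_sum_card_inter hS hX
  have heq : ∑ i, #(X ∩ S i) = ∑ _i : ι, 1 :=
    le_antisymm (sum_le_sum fun i _ => hcol i) (by simpa [← hsum] using hc)
  exact ⟨by simpa [hsum] using heq, fun i => (sum_eq_sum_iff_of_le fun i _ => hcol i).1 heq i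
    (mem_univ i)⟩

variable [DecidableEq ι]

lemma pivots_eq (hX : IsColorfulExcept S i₀ X) :
    pivots S i₀ X = S i₀ \ X ∪ (univ.filter fun i => i ≠ i₀ ∧ Disjoint X (S i)).biUnion S := by
  ext q
  simp only [pivots, mem_filter, mem_sdiff, mem_biUnion, mem_univ, true_and, mem_union]
  constructor
  · rintro ⟨⟨⟨c, hc⟩, hqX⟩, h⟩
    rcases eq_or_ne c i₀ with rfl | hci
    · exact Or.inl ⟨hc, hqX⟩
    · exact Or.inr ⟨c, ⟨hci, ((isColorfulExcept_insert_iff hS hX hqX hc).1 h).resolve_left hci⟩,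
        hc⟩
  · rintro (⟨hq, hqX⟩ | ⟨c, ⟨-, hdisj⟩, hc⟩)
    · exact ⟨⟨⟨i₀, hq⟩, hqX⟩, (isColorfulExcept_insert_iff hS hX hqX hq).2 (Or.inl rfl)⟩
    · have hqX : q ∉ X := disjoint_right.1 hdisj hc
      exact ⟨⟨⟨c, hc⟩, hqX⟩, (isColorfulExcept_insert_iff hS hX hqX hc).2 (Or.inr hdisj)⟩

lemma odd_card_pivots_iff (hcard : ∀ i, #(S i) = 2) (hX : IsColorfulExcept S i₀ X) :
    Odd #(pivots S i₀ X) ↔ #(X ∩ S i₀) = 1 := by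
  rw [pivots_eq hS hX, card_union_of_disjoint ((disjoint_biUnion_right _ _ _).2 fun i hi =>
      (hS (mem_filter.1 hi).2.1.symm).mono_left sdiff_subset),
    card_biUnion fun i _ j _ hij => hS hij, sum_congr rfl fun i _ => hcard i, card_sdiff,
    hcard, sum_const, smul_eq_mul, Nat.odd_iff]
  have : #(X ∩ S i₀) ≤ 2 := hcard i₀ ▸ card_le_card inter_subset_right
  omega

end Colorings

section PivotGraph

variable {ι : Type*} [Fintype ι] [DecidableEq E]

def IsAlmostColorfulSimplex (S : ι → Finset E) (i₀ : ι) (d : ℕ) (X : Finset E) : Prop :=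
  #X = d + 1 ∧ (0 : E) ∈ convexHull ℝ (X : Set E) ∧ IsColorfulExcept S i₀ X

def pivotGraph (S : ι → Finset E) (i₀ : ι) (d : ℕ) : SimpleGraph (univ.biUnion S).powerset where
  Adj X Y := X ≠ Y ∧ IsAlmostColorfulSimplex S i₀ d X ∧ IsAlmostColorfulSimplex S i₀ d Y ∧
    #(X.1 ∪ Y.1) = d + 2 ∧ IsColorfulExcept S i₀ (X.1 ∪ Y.1)
  symm := ⟨fun X Y ⟨hne, hX, hY, hc, hcol⟩ =>
    ⟨hne.symm, hY, hX, union_comm X.1 Y.1 ▸ hc, union_comm X.1 Y.1 ▸ hcol⟩⟩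
  loopless := ⟨fun _ h => h.1 rfl⟩

variable {S : ι → Finset E} {i₀ : ι} {d : ℕ}

lemma exists_mem_pivots_of_adj [DecidableEq ι] {X Y : (univ.biUnion S).powerset}
    (h : (pivotGraph S i₀ d).Adj X Y) : ∃ q ∈ pivots S i₀ X, X.1 ∪ Y.1 = insert q X.1 := by
  obtain ⟨-, hX, -, hc, hcol⟩ := h
  obtain ⟨q, hqX, hXY⟩ :=
    exists_eq_insert_iff (s := X.1) (t := X.1 ∪ Y.1) |>.2 ⟨subset_union_left, by rw [hc, hX.1]⟩
  have hqU : q ∈ univ.biUnion S := union_subset (mem_powerset.1 X.2) (mem_powerset.1 Y.2)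
    (hXY ▸ mem_insert_self q X.1)
  exact ⟨q, mem_filter.2 ⟨mem_sdiff.2 ⟨hqU, hqX⟩, hXY ▸ hcol⟩, hXY.symm⟩

variable [FiniteDimensional ℝ E]

lemma eq_of_adj_of_union_eq (hE : Module.finrank ℝ E ≤ d)
    (hU : LinearGeneralPosition d (univ.biUnion S)) {X Y Y' : (univ.biUnion S).powerset}
    (hY : (pivotGraph S i₀ d).Adj X Y) (hY' : (pivotGraph S i₀ d).Adj X Y')
    (h : X.1 ∪ Y.1 = X.1 ∪ Y'.1) : Y = Y' := by
  obtain ⟨hXY, hX, ⟨hYc, hY0, -⟩, hc, -⟩ := hY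
  obtain ⟨hXY', -, ⟨hY'c, hY'0, -⟩, -, -⟩ := hY'
  have hWU : X.1 ∪ Y.1 ⊆ univ.biUnion S := union_subset (mem_powerset.1 X.2) (mem_powerset.1 Y.2)
  exact Subtype.ext <| (hU.existsUnique_zero_mem_convexHull_ne hE hWU hc subset_union_left hX.1
    hX.2.1).unique ⟨subset_union_right, hYc, hY0, fun h => hXY (Subtype.ext h.symm)⟩
    ⟨h ▸ subset_union_right, hY'c, hY'0, fun h => hXY' (Subtype.ext h.symm)⟩

variable [DecidableEq ι]

lemma exists_adj_of_mem_pivots (hE : Module.finrank ℝ E ≤ d)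
    (hU : LinearGeneralPosition d (univ.biUnion S)) {X : (univ.biUnion S).powerset}
    (hX : IsAlmostColorfulSimplex S i₀ d X) {q : E} (hq : q ∈ pivots S i₀ X) :
    ∃ Y, (pivotGraph S i₀ d).Adj X Y ∧ X.1 ∪ Y.1 = insert q X.1 := by
  obtain ⟨hq, hcol⟩ := mem_filter.1 hq
  obtain ⟨hqU, hqX⟩ := mem_sdiff.1 hq
  have hWU : insert q X.1 ⊆ univ.biUnion S := insert_subset hqU (mem_powerset.1 X.2)
  have hWc : #(insert q X.1) = d + 2 := by rw [card_insert_of_notMem hqX, hX.1]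
  obtain ⟨Y, ⟨hYW, hYc, hY, hYX⟩, -⟩ :=
    hU.existsUnique_zero_mem_convexHull_ne hE hWU hWc (subset_insert q X.1) hX.1 hX.2.1
  have hqY : q ∈ Y := by
    by_contra hqY
    refine hYX (eq_of_subset_of_card_le (fun y hy => ?_) (by rw [hYc, hX.1]))
    exact (mem_insert.1 (hYW hy)).resolve_left (ne_of_mem_of_not_mem hy hqY)
  have hXY : X.1 ∪ Y = insert q X.1 :=
    (union_subset (subset_insert q X.1) hYW).antisymm (insert_subset (mem_union_right _ hqY)
      subset_union_left)
  refine ⟨⟨Y, mem_powerset.2 (hYW.trans hWU)⟩, ⟨fun h => hYX (congrArg Subtype.val h).symm, hX,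
    ⟨hYc, hY, hcol.mono hYW⟩, ?_, ?_⟩, hXY⟩
  · rwa [hXY]
  · rwa [hXY]

lemma degree_pivotGraph (hE : Module.finrank ℝ E ≤ d)
    (hU : LinearGeneralPosition d (univ.biUnion S)) [DecidableRel (pivotGraph S i₀ d).Adj]
    {X : (univ.biUnion S).powerset} (hX : IsAlmostColorfulSimplex S i₀ d X) :
    (pivotGraph S i₀ d).degree X = #(pivots S i₀ X) := by
  rw [← SimpleGraph.card_neighborFinset_eq_degree, ← card_image_of_injOn (s := pivots S i₀ X)
    (f := fun q => insert q X.1) fun q hq _ _ h =>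
      (insert_inj (mem_sdiff.1 (mem_filter.1 hq).1).2).1 h]
  refine card_nbij (fun Y => X.1 ∪ Y.1) (fun Y hY => ?_) (fun Y hY Y' hY' h => ?_) fun W hW => ?_
  · obtain ⟨q, hq, hXY⟩ := exists_mem_pivots_of_adj ((SimpleGraph.mem_neighborFinset _ _ _).1 hY)
    exact mem_image.2 ⟨q, hq, hXY.symm⟩
  · exact eq_of_adj_of_union_eq hE hU ((SimpleGraph.mem_neighborFinset _ _ _).1 hY)
      ((SimpleGraph.mem_neighborFinset _ _ _).1 hY') h
  · obtain ⟨q, hq, rfl⟩ := mem_image.1 hW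
    obtain ⟨Y, hY, hXY⟩ := exists_adj_of_mem_pivots hE hU hX hq
    exact ⟨Y, (SimpleGraph.mem_neighborFinset _ _ _).2 hY, hXY⟩

theorem odd_degree_pivotGraph_iff (hE : Module.finrank ℝ E ≤ d)
    (hU : LinearGeneralPosition d (univ.biUnion S)) (hS : Pairwise (Disjoint on S))
    (hcard : ∀ i, #(S i) = 2) [DecidableRel (pivotGraph S i₀ d).Adj]
    (X : (univ.biUnion S).powerset) :
    Odd ((pivotGraph S i₀ d).degree X) ↔
      IsAlmostColorfulSimplex S i₀ d X ∧ #(X.1 ∩ S i₀) = 1 := by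
  by_cases hX : IsAlmostColorfulSimplex S i₀ d X
  · rw [degree_pivotGraph hE hU hX, odd_card_pivots_iff hS hcard hX.2.2, and_iff_right hX]
  · refine iff_of_false (fun hodd => hX ?_) fun h => hX h.1
    obtain ⟨Y, hY⟩ := (SimpleGraph.degree_pos_iff_exists_adj _ _).1 hodd.pos
    exact hY.2.1

end PivotGraph

theorem exists_another_colorful_simplex_general (d : ℕ)
    (S : Fin (d + 1) → Finset (Fin d → ℝ))
    (hcard : ∀ i, (S i).card = 2)
    (hdisj : ∀ i j, i ≠ j → Disjoint (S i) (S j))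
    (hgen : ∀ T : Finset (Fin d → ℝ),
      (T : Set (Fin d → ℝ)) ⊆ (⋃ i, (S i : Set (Fin d → ℝ))) → T.card = d →
      LinearIndependent ℝ (fun x : T => (x : Fin d → ℝ)))
    (T₀ : Finset (Fin d → ℝ))
    (hT₀sub : (T₀ : Set (Fin d → ℝ)) ⊆ ⋃ i, (S i : Set (Fin d → ℝ)))
    (hT₀col : ∀ i, (T₀ ∩ S i).card ≤ 1)
    (hT₀ : (0 : Fin d → ℝ) ∈ convexHull ℝ (T₀ : Set (Fin d → ℝ))) :
    ∃ T : Finset (Fin d → ℝ),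
      T ≠ T₀ ∧
      (T : Set (Fin d → ℝ)) ⊆ (⋃ i, (S i : Set (Fin d → ℝ))) ∧
      (∀ i, (T ∩ S i).card ≤ 1) ∧
      (0 : Fin d → ℝ) ∈ convexHull ℝ (T : Set (Fin d → ℝ)) := by
  classical
  have hS : Pairwise (Disjoint on S) := fun i j => hdisj i j
  have subset_U : ∀ T : Finset (Fin d → ℝ),
      (T : Set (Fin d → ℝ)) ⊆ ⋃ i, (S i : Set (Fin d → ℝ)) ↔ T ⊆ univ.biUnion S := fun T => by
    rw [← coe_subset, coe_biUnion]; simp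
  have hE : Module.finrank ℝ (Fin d → ℝ) ≤ d := (Module.finrank_fin_fun ℝ).le
  have hU : LinearGeneralPosition d (univ.biUnion S) := fun T hTU hTd => by
    obtain ⟨T', hTT', hT'U, hT'c⟩ := exists_subsuperset_card_eq hTU hTd
      (by rw [card_biUnion fun i _ j _ hij => hS hij]; simp [hcard]; omega)
    exact LinearIndepOn.mono (hgen T' ((subset_U T').2 hT'U) hT'c) (coe_subset.2 hTT')
  have hT₀U := (subset_U T₀).1 hT₀sub
  obtain ⟨hT₀c, hT₀one⟩ := card_inter_eq_one_of_colorful hS hT₀U hT₀col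
    (by simpa using hU.lt_card_of_zero_mem_convexHull hT₀U hT₀)
  obtain ⟨T, hTT₀, hT⟩ := (pivotGraph S 0 d).exists_ne_odd_degree_of_exists_odd_degree
    ⟨T₀, mem_powerset.2 hT₀U⟩ <| (odd_degree_pivotGraph_iff hE hU hS hcard _).2
      ⟨⟨by simpa using hT₀c, hT₀, fun i _ => hT₀col i⟩, hT₀one 0⟩
  obtain ⟨⟨-, hT0, hTcol⟩, hT1⟩ := (odd_degree_pivotGraph_iff hE hU hS hcard T).1 hT
  refine ⟨T, fun h => hTT₀ (Subtype.ext h), (subset_U T).2 (mem_powerset.1 T.2), fun i => ?_, hT0⟩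
  rcases eq_or_ne i 0 with rfl | hi
  · exact hT1.le
  · exact hTcol i hi

/-- **Finding Another Colorful Simplex (existence).** Given `d+1` pairwise disjoint
two-element sets of points in `ℝ^d` in general position with respect to the origin,
and a positively dependent colorful set `T₀`, there exists another positively dependent
colorful set `T ≠ T₀`. -/
theorem exists_another_colorful_simplex (d : ℕ) (hd : 0 < d)
    (S : Fin (d + 1) → Finset (Fin d → ℝ))
    (hcard : ∀ i, (S i).card = 2)
    (hdisj : ∀ i j, i ≠ j → Disjoint (S i) (S j))
    (hgen : ∀ T : Finset (Fin d → ℝ),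
      (T : Set (Fin d → ℝ)) ⊆ (⋃ i, (S i : Set (Fin d → ℝ))) → T.card = d →
      LinearIndependent ℝ (fun x : T => (x : Fin d → ℝ)))
    (T₀ : Finset (Fin d → ℝ))
    (hT₀sub : (T₀ : Set (Fin d → ℝ)) ⊆ ⋃ i, (S i : Set (Fin d → ℝ)))
    (hT₀col : ∀ i, (T₀ ∩ S i).card ≤ 1)
    (hT₀ : (0 : Fin d → ℝ) ∈ convexHull ℝ (T₀ : Set (Fin d → ℝ))) :
    ∃ T : Finset (Fin d → ℝ),
      T ≠ T₀ ∧
      (T : Set (Fin d → ℝ)) ⊆ (⋃ i, (S i : Set (Fin d → ℝ))) ∧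
      (∀ i, (T ∩ S i).card ≤ 1) ∧
      (0 : Fin d → ℝ) ∈ convexHull ℝ (T : Set (Fin d → ℝ)) :=
  exists_another_colorful_simplex_general d S hcard hdisj hgen T₀ hT₀sub hT₀col hT₀
end

section
/- Let d be a positive integer, let u_1, ..., u_d ∈ ℝ^d be affinely independent points, and let n ∈ ℝ^d and c ∈ ℝ with n ≠ 0 be such that n·u_i = c for all i (so the affine hull of {u_1,...,u_d} is the hyperplane H = {x ∈ ℝ^d : n·x = c}). Assume c ≠ 0 (so 0 ∉ H), and let v ∈ ℝ^d be a point on the same open side of H as the origin, i.e., (n·v − c)·c < 0. Let t ∈ ℝ^d with n·t ≠ c, and suppose there exist real numbers r, s, x_1, ..., x_d with r > 0 such that r t + s v + Σ_{i=1}^d x_i u_i = 0 and r + s + Σ_{i=1}^d x_i = 0. Then s < 0 if and only if t lies on the same open side of H as the origin, i.e., (n·t − c)·c < 0. -/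
open Matrix

/-- **Reduced cost lemma** for the simplex-like Bárány–Onn algorithm. With
`H = {x : n ⬝ᵥ x = c}` the affine hull of the affinely independent points `u 1, …, u d`,
`0 ∉ H`, `v` on the same open side of `H` as the origin, and
`r • t + s • v + ∑ x i • u i = 0` with `r > 0` and `r + s + ∑ x i = 0`,
the coefficient `s` is negative iff `t` is on the same open side of `H` as the origin. -/
theorem reduced_cost_negative_iff (d : ℕ) (hd : 0 < d)
    (u : Fin d → (Fin d → ℝ)) (hu : AffineIndependent ℝ u)
    (n : Fin d → ℝ) (c : ℝ) (hn : n ≠ 0) (hc : c ≠ 0)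
    (hH : ∀ i, n ⬝ᵥ u i = c)
    (v : Fin d → ℝ) (hv : (n ⬝ᵥ v - c) * c < 0)
    (t : Fin d → ℝ) (ht : n ⬝ᵥ t ≠ c)
    (r s : ℝ) (x : Fin d → ℝ) (hr : 0 < r)
    (hsum : r • t + s • v + ∑ i, x i • u i = 0)
    (hcoef : r + s + ∑ i, x i = 0) :
    s < 0 ↔ (n ⬝ᵥ t - c) * c < 0 := by
  have h1 : n ⬝ᵥ (r • t + s • v + ∑ i, x i • u i) = 0 := by rw [hsum]; simp
  have hsum2 : n ⬝ᵥ (∑ i, x i • u i) = (∑ i, x i) * c := by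
    simp only [dotProduct, Finset.sum_apply, Pi.smul_apply, smul_eq_mul, Finset.mul_sum,
      Finset.sum_mul]
    rw [Finset.sum_comm]
    refine Finset.sum_congr rfl fun i _ => ?_
    have := hH i
    simp only [dotProduct] at this
    rw [← this, Finset.mul_sum]
    exact Finset.sum_congr rfl fun j _ => by ring
  have h2 : r * (n ⬝ᵥ t) + s * (n ⬝ᵥ v) + (∑ i, x i) * c = 0 := by
    simpa [dotProduct_add, dotProduct_smul, hsum2, smul_eq_mul] using h1
  have hx : ∑ i, x i = -(r + s) := by linarith
  rw [hx] at h2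
  have key : r * (n ⬝ᵥ t - c) + s * (n ⬝ᵥ v - c) = 0 := by linarith [h2]; 
  have keyc : r * ((n ⬝ᵥ t - c) * c) + s * ((n ⬝ᵥ v - c) * c) = 0 := by
    linear_combination c * key
  constructor
  · intro hs
    by_contra h
    push_neg at h
    nlinarith [mul_pos_of_neg_of_neg hs hv, mul_nonneg hr.le h]
  · intro hsign
    by_contra hs
    push_neg at hs
    nlinarith [mul_neg_of_pos_of_neg hr hsign, mul_nonpos_of_nonneg_of_nonpos hs hv.le]
end

section
/- Let D = (V, A) be a finite directed graph with n vertices, where A ⊆ V × V is the set of arcs, and let s and t be two distinct vertices of D. Let P_1, ..., P_{n−1} be n−1 directed s-t paths of D that are pairwise arc-disjoint. Then there exists a directed s-t path P sharing at most one arc with each P_i, i.e., |arcs(P) ∩ arcs(P_i)| ≤ 1 for every i ∈ {1,...,n−1}. -/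
/-- A directed `s`-`t` path of the directed graph with arc set `A`: a list of pairwise
distinct vertices starting at `s` and ending at `t`, with every consecutive pair an arc. -/
def IsDipath {V : Type*} (A : Set (V × V)) (s t : V) (l : List V) : Prop :=
  l.head? = some s ∧ l.getLast? = some t ∧ l.Nodup ∧ ∀ a ∈ l.zip l.tail, a ∈ A

/-- The arc set of a path given as a list of vertices. -/
def pathArcs {V : Type*} [DecidableEq V] (l : List V) : Finset (V × V) :=
  (l.zip l.tail).toFinset

/-- Each path has a second vertex `v ≠ s` with `(s,v)` an arc of the path. -/
lemma second_vertex {V : Type*} [DecidableEq V] {A : Set (V × V)} {s t : V} (hst : s ≠ t)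
    {l : List V} (h : IsDipath A s t l) :
    ∃ v, v ≠ s ∧ (s, v) ∈ pathArcs l ∧ (s, v) ∈ A := by
  obtain ⟨h1, h2, h3, h4⟩ := h
  match l with
  | [] => simp at h1
  | [a] =>
    simp at h1 h2
    exact absurd (h1.symm.trans h2) hst
  | a :: b :: r =>
    simp only [List.head?_cons, Option.some.injEq] at h1
    subst h1
    refine ⟨b, ?_, ?_, ?_⟩
    · intro hb
      subst hb
      simp at h3
    · simp [pathArcs]
    · exact h4 (a, b) (by simp)

/-- **Colorful paths.** If a directed graph on `n` vertices contains `n - 1` pairwise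
arc-disjoint `s`-`t` paths `P_1, …, P_{n-1}` (with `s ≠ t`), then it contains an `s`-`t`
path sharing at most one arc with each `P_i`. -/
theorem exists_colorful_path {V : Type*} [Fintype V] [DecidableEq V]
    (n : ℕ) (hn : Fintype.card V = n) (A : Set (V × V))
    (s t : V) (hst : s ≠ t)
    (P : Fin (n - 1) → List V)
    (hP : ∀ i, IsDipath A s t (P i))
    (hdisj : ∀ i j, i ≠ j → Disjoint (pathArcs (P i)) (pathArcs (P j))) :
    ∃ l : List V, IsDipath A s t l ∧
      ∀ i, (pathArcs l ∩ pathArcs (P i)).card ≤ 1 := by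
  -- choose the second vertex of each path
  choose f hfs hfarc hfA using fun i => second_vertex hst (hP i)
  -- f is injective by arc-disjointness
  have hinj : Function.Injective f := by
    intro i j hij
    by_contra hne
    have := hdisj i j hne
    rw [Finset.disjoint_left] at this
    exact this (hfarc i) (hij ▸ hfarc j)
  -- image of f equals univ.erase s by cardinality
  have hsub : Finset.univ.image f ⊆ Finset.univ.erase s := by
    intro v hv
    simp only [Finset.mem_image] at hv
    obtain ⟨i, -, rfl⟩ := hv
    exact Finset.mem_erase.2 ⟨hfs i, Finset.mem_univ _⟩
  have hcard : (Finset.univ.erase s).card ≤ (Finset.univ.image f).card := by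
    rw [Finset.card_image_of_injective _ hinj,
      Finset.card_erase_of_mem (Finset.mem_univ s)]
    simp [hn]
  have heq := Finset.eq_of_subset_of_card_le hsub hcard
  have ht : t ∈ Finset.univ.image f := by
    rw [heq]
    exact Finset.mem_erase.2 ⟨Ne.symm hst, Finset.mem_univ _⟩
  obtain ⟨j, -, hj⟩ := Finset.mem_image.1 ht
  -- the path [s, t]
  refine ⟨[s, t], ⟨rfl, rfl, by simp [hst], ?_⟩, fun i => ?_⟩
  · intro a ha
    simp at ha
    subst ha
    exact hj ▸ hfA j
  · have : pathArcs [s, t] = {(s, t)} := by simp [pathArcs]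
    calc (pathArcs [s, t] ∩ pathArcs (P i)).card ≤ (pathArcs [s, t]).card :=
          Finset.card_le_card (Finset.inter_subset_left)
      _ = 1 := by rw [this]; simp
end

section
/- Let M be a finite matroid of rank d on a ground set E, and let c : E → {1,...,d} be a coloring of its elements in d colors. If for every color i ∈ {1,...,d} there exists a basis of M all of whose elements have color i (a monochromatic basis in color i), then there exists a basis B of M whose elements have pairwise distinct colors (a colorful basis). -/
/-! Choose a base `B` whose set of colours is maximal under inclusion. If two elements `x ≠ x'`
of `B` shared a colour, then, as `B` has `d` elements, some colour `i` would be missing from `B`.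
Exchanging `x` against an element of the monochromatic base of colour `i` keeps every colour of
`B` (it is still carried by `x'`) and adds `i`, contradicting maximality. -/

theorem Set.exists_notMem_image_of_not_injOn {α β : Type*} [Finite β] {f : α → β} {s : Set α}
    (hs : s.Finite) (hcard : s.ncard ≤ Nat.card β) (hf : ¬ Set.InjOn f s) :
    ∃ b, b ∉ f '' s := by
  by_contra! hsurj
  have himage : f '' s = Set.univ := Set.eq_univ_of_forall hsurj
  refine hf (Set.injOn_of_ncard_image_eq (le_antisymm (Set.ncard_image_le hs) ?_) hs)
  rwa [himage, Set.ncard_univ]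

theorem Set.image_diff_singleton_of_apply_eq {α β : Type*} {f : α → β} {s : Set α} {x x' : α}
    (hx' : x' ∈ s) (hne : x' ≠ x) (hfx : f x = f x') : f '' (s \ {x}) = f '' s := by
  refine (Set.image_mono Set.sdiff_subset).antisymm ?_
  rintro _ ⟨y, hy, rfl⟩
  obtain rfl | hyx := eq_or_ne y x
  · exact ⟨x', ⟨hx', hne⟩, hfx.symm⟩
  · exact ⟨y, ⟨hy, hyx⟩, rfl⟩

namespace Matroid

variable {α β : Type*} {M : Matroid α} {B B' : Set α}

theorem IsBase.exists_isBase_image_ssuperset (hB : M.IsBase B) (hB' : M.IsBase B') {c : α → β}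
    (hc : ¬ Set.InjOn c B) (hdisj : Disjoint (c '' B) (c '' B')) :
    ∃ B'', M.IsBase B'' ∧ c '' B ⊂ c '' B'' := by
  simp only [Set.InjOn, not_forall] at hc
  obtain ⟨x, hx, x', hx', hcx, hne⟩ := hc
  have hxB' : x ∉ B' := fun h ↦ hdisj.notMem_of_mem_left (Set.mem_image_of_mem c hx) ⟨x, h, rfl⟩
  obtain ⟨y, ⟨hyB', -⟩, hexch⟩ := hB.exchange hB' ⟨hx, hxB'⟩
  refine ⟨_, hexch, ?_⟩
  rw [Set.image_insert_eq, Set.image_diff_singleton_of_apply_eq hx' (Ne.symm hne) hcx]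
  exact Set.ssubset_insert (hdisj.notMem_of_mem_right (Set.mem_image_of_mem c hyB'))

end Matroid

/-- **Colorful basis in a matroid.** Let `M` be a finite matroid of rank `d` (every base has
`d` elements) whose elements are colored with `d` colors. If for every color there is a
monochromatic base in that color, then there is a colorful base, i.e. a base whose elements
have pairwise distinct colors. -/
theorem exists_colorful_base {α : Type*} (M : Matroid α) [M.Finite]
    (d : ℕ) (hrank : ∀ B, M.IsBase B → B.ncard = d)
    (c : α → Fin d)
    (hmono : ∀ i : Fin d, ∃ B, M.IsBase B ∧ ∀ e ∈ B, c e = i) :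
    ∃ B, M.IsBase B ∧ Set.InjOn c B := by
  obtain ⟨B, hB, hmax⟩ := Set.Finite.exists_maximalFor' (c '' ·) {B | M.IsBase B}
    (Set.toFinite _) M.exists_isBase
  refine ⟨B, hB, by_contra fun hinj ↦ ?_⟩
  obtain ⟨i, hi⟩ := Set.exists_notMem_image_of_not_injOn hB.finite
    (by rw [Nat.card_fin, hrank B hB]) hinj
  obtain ⟨Bi, hBi, hBic⟩ := hmono i
  have hdisj : Disjoint (c '' B) (c '' Bi) := by
    rw [Set.disjoint_right]
    rintro _ ⟨e, he, rfl⟩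
    rwa [hBic e he]
  obtain ⟨B'', hB'', hssub⟩ := hB.exists_isBase_image_ssuperset hBi hinj hdisj
  exact hssub.not_subset (hmax hB'' hssub.subset)
end

section
/- Let d ≥ 0 be an integer and let λ : {1,...,d+1} × {false, true} → {1,...,d+1} be any labeling of the 2(d+1) vertices of the boundary of the (d+1)-dimensional cross-polytope, the vertices being indexed by pairs (i, b) with i ∈ {1,...,d+1} and b ∈ {false, true} (the two antipodal vertices of pair i). Call a function g : {1,...,d+1} → {false, true} fully-labeled if the map i ↦ λ(i, g(i)) is a bijection of {1,...,d+1}. If there exists a fully-labeled g_0, then there exists a fully-labeled g with g ≠ g_0. -/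
/-!
Let `e` be the bijection `i ↦ λ(i, g₀ i)` and let `f i := e⁻¹ (λ(i, ¬g₀ i))` be the index whose
`g₀`-vertex carries the label of the antipode of `i`. The map `f` permutes its set `S` of periodic
points, which is nonempty since the index set is finite and nonempty. Flipping `g₀` exactly on `S`
gives a facet whose labeling is `e ∘ φ`, where `φ` is `f` on `S` and the identity elsewhere; `φ`
is a bijection, so the new facet is again fully-labeled.
-/

open Function Set

namespace Function

variable {α : Type*}

theorem periodicPts_nonempty [Finite α] [Nonempty α] (f : α → α) : (periodicPts f).Nonempty := by
  obtain ⟨m, n, hne, heq⟩ :=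
    Finite.exists_ne_map_eq_of_infinite (f^[·] (Classical.arbitrary α))
  wlog hlt : m < n generalizing m n
  · exact this n m hne.symm heq.symm (by omega)
  refine ⟨f^[m] (Classical.arbitrary α), mk_mem_periodicPts (n := n - m) (by omega) ?_⟩
  rw [IsPeriodicPt, IsFixedPt, ← iterate_add_apply, Nat.sub_add_cancel hlt.le]
  exact heq.symm

theorem bijective_piecewise_periodicPts_id [Finite α] (f : α → α)
    [DecidablePred (· ∈ periodicPts f)] : Bijective ((periodicPts f).piecewise f id) := by
  refine Finite.injective_iff_bijective.mp ((injective_piecewise_iff _).mpr ⟨?_, injOn_id _, ?_⟩)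
  · exact (bijOn_periodicPts f).injOn
  · rintro x hx y hy rfl
    exact hy ((bijOn_periodicPts f).mapsTo hx)

end Function

section Flip

variable {ι κ : Type*} (lab : ι × Bool → κ) {g₀ : ι → Bool}

noncomputable def antipodalMatch (hg₀ : Bijective fun i => lab (i, g₀ i)) (i : ι) : ι :=
  (Equiv.ofBijective _ hg₀).symm (lab (i, !g₀ i))

theorem label_piecewise_not_eq_comp (hg₀ : Bijective fun i => lab (i, g₀ i)) (s : Set ι)
    [DecidablePred (· ∈ s)] :
    (fun i => lab (i, s.piecewise (fun i => !g₀ i) g₀ i)) =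
      (fun i => lab (i, g₀ i)) ∘ s.piecewise (antipodalMatch lab hg₀) id := by
  funext i
  by_cases hi : i ∈ s
  · simp only [comp_apply, piecewise_eq_of_mem _ _ _ hi, antipodalMatch]
    exact ((Equiv.ofBijective _ hg₀).apply_symm_apply _).symm
  · simp only [comp_apply, piecewise_eq_of_notMem _ _ _ hi, id]

end Flip

/-- **Another fully-labeled facet of the cross-polytope.** The vertices of the boundary of
the `(d+1)`-dimensional cross-polytope are indexed by pairs `(i, b)` with `i : Fin (d+1)`
and `b : Bool` (the two antipodal vertices of pair `i`); a facet is a choice function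
`g : Fin (d+1) → Bool`. Given a labeling `λ` of the vertices in `d+1` labels, if some facet
`g₀` is fully-labeled (i.e. `i ↦ λ (i, g₀ i)` is a bijection), then there is another
fully-labeled facet `g ≠ g₀`. -/
theorem exists_another_fully_labeled_facet (d : ℕ)
    (lab : Fin (d + 1) × Bool → Fin (d + 1))
    (g₀ : Fin (d + 1) → Bool)
    (hg₀ : Function.Bijective (fun i => lab (i, g₀ i))) :
    ∃ g : Fin (d + 1) → Bool,
      g ≠ g₀ ∧ Function.Bijective (fun i => lab (i, g i)) := by
  classical
  obtain ⟨x, hx⟩ := periodicPts_nonempty (antipodalMatch lab hg₀)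
  refine ⟨(periodicPts (antipodalMatch lab hg₀)).piecewise (fun i => !g₀ i) g₀, fun h => ?_, ?_⟩
  · simpa [piecewise_eq_of_mem _ _ _ hx] using congrFun h x
  · rw [label_piecewise_not_eq_comp lab hg₀]
    exact hg₀.comp (bijective_piecewise_periodicPts_id _)
end

section
/- Let d be a positive integer, let S_1, ..., S_d be finite sets of points in ℝ^d with |S_i| = n_i, and let p ∈ ℝ^d be such that 0 is not in the convex hull of {p} ∪ ⋃_{i=1}^d S_i. Let A_i be the d × n_i matrix whose columns are the points of S_i, let P = {x = (x_1,...,x_d) ∈ ℝ_+^{n_1} × ... × ℝ_+^{n_d} : Σ_{i=1}^d A_i x_i = p}, and let P_i = {x ∈ P : x_i = 0}. Then conv(⋃_{i=1}^d P_i) equals the set of all x = (x_1,...,x_d) ∈ ℝ_+^{n_1} × ... × ℝ_+^{n_d} for which there exist vectors x_{ij} ∈ ℝ_+^{n_j} (for i, j ∈ {1,...,d}) and scalars y_1,...,y_d ∈ ℝ_+ satisfying: Σ_{j=1}^d A_j x_{ij} = y_i p for all i; Σ_{i=1}^d x_{ij} = x_j for all j; Σ_{i=1}^d y_i = 1; and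 x_{ii} = 0 for all i. -/
/-- The polyhedron `P = {x = (x_1,…,x_d) ∈ ℝ_+^{n_1} × ⋯ × ℝ_+^{n_d} : ∑ A_i x_i = p}`,
where the columns of `A_i` are the points `v i j`. -/
def polyP {d : ℕ} (n : Fin d → ℕ) (v : ∀ i, Fin (n i) → (Fin d → ℝ)) (p : Fin d → ℝ) :
    Set (∀ i, Fin (n i) → ℝ) :=
  {x | (∀ i j, 0 ≤ x i j) ∧ ∑ i, ∑ j, x i j • v i j = p}

/-- The face `P_i = {x ∈ P : x_i = 0}`. -/
def polyPi {d : ℕ} (n : Fin d → ℕ) (v : ∀ i, Fin (n i) → (Fin d → ℝ)) (p : Fin d → ℝ)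
    (i : Fin d) : Set (∀ i, Fin (n i) → ℝ) :=
  {x ∈ polyP n v p | x i = 0}

/-- **`conv(⋃ i P_i)` as a projection of an explicit polyhedron.** Assuming
`0 ∉ conv({p} ∪ ⋃ i S_i)`, the convex hull of `⋃ i P_i` is exactly the set of nonnegative
block vectors `x = (x_1,…,x_d)` admitting a lift `(x_{ij}, y_i)` satisfying the stated
linear system. -/
theorem convexHull_union_faces_eq_projection (d : ℕ) (hd : 0 < d)
    (n : Fin d → ℕ) (v : ∀ i, Fin (n i) → (Fin d → ℝ))
    (p : Fin d → ℝ)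
    (h0 : (0 : Fin d → ℝ) ∉
      convexHull ℝ ({p} ∪ ⋃ i, Set.range (v i) : Set (Fin d → ℝ))) :
    convexHull ℝ (⋃ i, polyPi n v p i) =
      {x : ∀ i, Fin (n i) → ℝ |
        (∀ j k, 0 ≤ x j k) ∧
        ∃ (xx : Fin d → ∀ j, Fin (n j) → ℝ) (y : Fin d → ℝ),
          (∀ i j k, 0 ≤ xx i j k) ∧
          (∀ i, 0 ≤ y i) ∧
          (∀ i, ∑ j, ∑ k, xx i j k • v j k = y i • p) ∧
          (∀ j, ∑ i, xx i j = x j) ∧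
          (∑ i, y i = 1) ∧
          (∀ i, xx i i = 0)} := by
  have key : ∀ (c : ∀ j, Fin (n j) → ℝ), (∀ j k, 0 ≤ c j k) →
      (∑ j, ∑ k, c j k • v j k) = 0 → ∀ j k, c j k = 0 := by
    intro c hc hs
    by_contra hne
    push_neg at hne
    obtain ⟨j0, k0, hjk⟩ := hne
    have hT : 0 < ∑ j, ∑ k, c j k := by
      have h1 : 0 < c j0 k0 := lt_of_le_of_ne (hc j0 k0) (Ne.symm hjk)
      have h2 : c j0 k0 ≤ ∑ k, c j0 k :=
        Finset.single_le_sum (fun k _ => hc j0 k) (Finset.mem_univ k0)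
      have h3 : (∑ k, c j0 k) ≤ ∑ j, ∑ k, c j k :=
        Finset.single_le_sum (f := fun j => ∑ k, c j k)
          (fun j _ => Finset.sum_nonneg fun k _ => hc j k) (Finset.mem_univ j0)
      linarith
    apply h0
    have e1 : (∑ s : (j : Fin d) × Fin (n j), c s.1 s.2) = ∑ j, ∑ k, c j k := by
      rw [← Finset.univ_sigma_univ, Finset.sum_sigma]
    have e2 : (∑ s : (j : Fin d) × Fin (n j), c s.1 s.2 • v s.1 s.2) = 0 := by
      rw [← Finset.univ_sigma_univ, Finset.sum_sigma]; exact hs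
    have hmem := Finset.centerMass_mem_convexHull
      (s := ({p} ∪ ⋃ i, Set.range (v i) : Set (Fin d → ℝ)))
      (Finset.univ : Finset ((j : Fin d) × Fin (n j)))
      (w := fun s => c s.1 s.2) (z := fun s => v s.1 s.2)
      (fun s _ => hc s.1 s.2)
      (by rw [e1]; exact hT)
      (fun s _ => Or.inr (Set.mem_iUnion.2 ⟨s.1, Set.mem_range_self s.2⟩))
    have hcm : (Finset.univ : Finset ((j : Fin d) × Fin (n j))).centerMass
        (fun s => c s.1 s.2) (fun s => v s.1 s.2) = 0 := by
      rw [Finset.centerMass, e2, smul_zero]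
    rwa [hcm] at hmem
  ext x
  simp only [Set.mem_setOf_eq]
  constructor
  · -- forward
    intro hx
    rw [convexHull_eq] at hx
    obtain ⟨ι, t, w, z, hw0, hw1, hz, hcm⟩ := hx
    haveI : Nonempty (Fin d) := ⟨⟨0, hd⟩⟩
    have hf : ∀ s : ι, ∃ i : Fin d, s ∈ t → z s ∈ polyPi n v p i := by
      intro s
      by_cases hs : s ∈ t
      · obtain ⟨i, hi⟩ := Set.mem_iUnion.1 (hz s hs)
        exact ⟨i, fun _ => hi⟩
      · exact ⟨Classical.arbitrary _, fun h => absurd h hs⟩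
    choose f hf using hf
    have hxsum : x = ∑ s ∈ t, w s • z s := by
      rw [← hcm, Finset.centerMass_eq_of_sum_1 _ _ hw1]
    set xx : Fin d → ∀ j, Fin (n j) → ℝ :=
      fun i => ∑ s ∈ t.filter (f · = i), w s • z s with hxx
    set y : Fin d → ℝ := fun i => ∑ s ∈ t.filter (f · = i), w s with hy
    have hznn : ∀ s ∈ t, ∀ j k, 0 ≤ z s j k := fun s hs => ((hf s hs).1).1
    have hxxapp : ∀ i j k, xx i j k = ∑ s ∈ t.filter (f · = i), w s * z s j k := by
      intro i j k
      simp [hxx, Finset.sum_apply]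
    refine ⟨?_, xx, y, ?_, ?_, ?_, ?_, ?_, ?_⟩
    · intro j k
      rw [hxsum]
      simp only [Finset.sum_apply, Pi.smul_apply, smul_eq_mul]
      exact Finset.sum_nonneg fun s hs => mul_nonneg (hw0 s hs) (hznn s hs j k)
    · intro i j k
      rw [hxxapp]
      exact Finset.sum_nonneg fun s hs =>
        mul_nonneg (hw0 s (Finset.mem_filter.1 hs).1) (hznn s (Finset.mem_filter.1 hs).1 j k)
    · intro i
      exact Finset.sum_nonneg fun s hs => hw0 s (Finset.mem_filter.1 hs).1
    · intro i
      have h1 : ∀ j k, xx i j k • v j k = ∑ s ∈ t.filter (f · = i), w s • (z s j k • v j k) := by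
        intro j k
        rw [hxxapp, Finset.sum_smul]
        exact Finset.sum_congr rfl fun s _ => mul_smul _ _ _
      calc ∑ j, ∑ k, xx i j k • v j k
          = ∑ j, ∑ k, ∑ s ∈ t.filter (f · = i), w s • (z s j k • v j k) := by
            simp_rw [h1]
        _ = ∑ j, ∑ s ∈ t.filter (f · = i), ∑ k, w s • (z s j k • v j k) :=
            Finset.sum_congr rfl fun j _ => Finset.sum_comm
        _ = ∑ s ∈ t.filter (f · = i), ∑ j, ∑ k, w s • (z s j k • v j k) :=
            Finset.sum_comm
        _ = ∑ s ∈ t.filter (f · = i), w s • (∑ j, ∑ k, z s j k • v j k) := by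
            simp_rw [Finset.smul_sum]
        _ = ∑ s ∈ t.filter (f · = i), w s • p := by
            refine Finset.sum_congr rfl fun s hs => ?_
            rw [((hf s (Finset.mem_filter.1 hs).1).1).2]
        _ = y i • p := by rw [hy, Finset.sum_smul]
    · intro j
      funext k
      rw [hxsum]
      simp only [Finset.sum_apply, Pi.smul_apply, smul_eq_mul]
      rw [← Finset.sum_fiberwise t f (fun s => w s * z s j k)]
      refine Finset.sum_congr rfl fun i _ => ?_
      rw [hxxapp]
    · rw [hy, Finset.sum_fiberwise t f w, hw1]
    · intro i
      funext k
      rw [hxxapp]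
      refine Finset.sum_eq_zero fun s hs => ?_
      have := (hf s (Finset.mem_filter.1 hs).1).2
      have hfz : z s i = 0 := by
        rw [← (Finset.mem_filter.1 hs).2]; exact this
      rw [hfz]; simp
  · -- backward
    rintro ⟨hxnn, xx, y, hxxnn, hynn, heq, hsum, hy1, hdiag⟩
    have hzero : ∀ i, y i = 0 → xx i = 0 := by
      intro i hyi
      have h := heq i
      rw [hyi, zero_smul] at h
      funext j k
      exact key (xx i) (hxxnn i) h j k
    set t := Finset.univ.filter (fun i => y i ≠ 0) with ht
    set z : Fin d → (∀ j, Fin (n j) → ℝ) := fun i => (y i)⁻¹ • xx i with hz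
    have hzt : ∀ i ∈ t, z i ∈ ⋃ i, polyPi n v p i := by
      intro i hi
      have hyi : 0 < y i := lt_of_le_of_ne (hynn i)
        (Ne.symm (Finset.mem_filter.1 hi).2)
      refine Set.mem_iUnion.2 ⟨i, ⟨⟨?_, ?_⟩, ?_⟩⟩
      · intro j k
        exact mul_nonneg (inv_nonneg.2 hyi.le) (hxxnn i j k)
      · have : ∀ j k, z i j k • v j k = (y i)⁻¹ • (xx i j k • v j k) := by
          intro j k
          simp [hz, smul_smul]
        calc ∑ j, ∑ k, z i j k • v j k
            = (y i)⁻¹ • ∑ j, ∑ k, xx i j k • v j k := by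
              simp_rw [this, ← Finset.smul_sum]
          _ = p := by rw [heq i, smul_smul, inv_mul_cancel₀ hyi.ne', one_smul]
      · simp [hz, hdiag i]
    have hws : (0:ℝ) < ∑ i ∈ t, y i := by
      rw [Finset.sum_filter_ne_zero, hy1]; norm_num
    have hmem := Finset.centerMass_mem_convexHull t
      (fun i hi => hynn i) hws hzt
    have hcm : t.centerMass y z = x := by
      rw [Finset.centerMass_eq_of_sum_1]
      · have : ∀ i ∈ t, y i • z i = xx i := by
          intro i hi
          rw [hz, smul_smul, mul_inv_cancel₀ (Finset.mem_filter.1 hi).2, one_smul]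
        rw [Finset.sum_congr rfl this]
        rw [ht, Finset.sum_filter_of_ne (p := fun i => y i ≠ 0) (fun i _ hne h => hne (hzero i h))]
        funext j
        rw [Finset.sum_apply]
        exact hsum j
      · rw [Finset.sum_filter_ne_zero, hy1]
    rwa [hcm] at hmem
end

section
/- Let A and B be m × n real matrices. Suppose z ∈ ℝ_+^n and w ∈ ℝ_+^m satisfy Az + w = 1_m (the all-ones vector of ℝ^m), and u ∈ ℝ_+^n and y ∈ ℝ_+^m satisfy u + Bᵀy = 1_n (the all-ones vector of ℝ^n), with the complementarity condition z·u + w·y = 0. If z ≠ 0 or y ≠ 0, then both z ≠ 0 and y ≠ 0, and the pair (y*, z*) with y* = y / (Σ_{i=1}^m y_i) and z* = z / (Σ_{j=1}^n z_j) is a Nash equilibrium of the bimatrix game (A, B). -/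
open Matrix

/-- **From complementary solutions to Nash equilibria** (Lemke–Howson). If `(z, w)` solves
`[A, I_m] x = 1_m`, `(u, y)` solves `[I_n, Bᵀ] x = 1_n`, both nonnegatively, with
complementarity `z·u + w·y = 0`, and `z ≠ 0` or `y ≠ 0`, then both `z ≠ 0` and `y ≠ 0`, and
the normalized pair `(y / ∑ y_i, z / ∑ z_j)` is a Nash equilibrium of the bimatrix game
`(A, B)`. -/
theorem nash_of_complementary_solutions (m n : ℕ)
    (A B : Matrix (Fin m) (Fin n) ℝ)
    (z u : Fin n → ℝ) (w y : Fin m → ℝ)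
    (hz : ∀ j, 0 ≤ z j) (hw : ∀ i, 0 ≤ w i) (hu : ∀ j, 0 ≤ u j) (hy : ∀ i, 0 ≤ y i)
    (hAz : A.mulVec z + w = fun _ => (1 : ℝ))
    (hBy : u + Bᵀ.mulVec y = fun _ => (1 : ℝ))
    (hcomp : z ⬝ᵥ u + w ⬝ᵥ y = 0)
    (hne : z ≠ 0 ∨ y ≠ 0) :
    z ≠ 0 ∧ y ≠ 0 ∧
    (∀ i, 0 ≤ ((∑ i, y i)⁻¹ • y) i) ∧ (∑ i, ((∑ i, y i)⁻¹ • y) i) = 1 ∧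
    (∀ j, 0 ≤ ((∑ j, z j)⁻¹ • z) j) ∧ (∑ j, ((∑ j, z j)⁻¹ • z) j) = 1 ∧
    (∀ y' : Fin m → ℝ, (∀ i, 0 ≤ y' i) → (∑ i, y' i) = 1 →
      y' ⬝ᵥ A.mulVec ((∑ j, z j)⁻¹ • z) ≤
        ((∑ i, y i)⁻¹ • y) ⬝ᵥ A.mulVec ((∑ j, z j)⁻¹ • z)) ∧
    (∀ z' : Fin n → ℝ, (∀ j, 0 ≤ z' j) → (∑ j, z' j) = 1 →
      ((∑ i, y i)⁻¹ • y) ⬝ᵥ B.mulVec z' ≤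
        ((∑ i, y i)⁻¹ • y) ⬝ᵥ B.mulVec ((∑ j, z j)⁻¹ • z)) := by
  classical
  have hzu0 : 0 ≤ z ⬝ᵥ u := Finset.sum_nonneg fun j _ => mul_nonneg (hz j) (hu j)
  have hwy0 : 0 ≤ w ⬝ᵥ y := Finset.sum_nonneg fun i _ => mul_nonneg (hw i) (hy i)
  have hzu : z ⬝ᵥ u = 0 := by linarith
  have hwy : w ⬝ᵥ y = 0 := by linarith
  have hAz' : A.mulVec z = (fun _ => (1:ℝ)) - w := eq_sub_of_add_eq hAz
  have hBy' : Bᵀ.mulVec y = (fun _ => (1:ℝ)) - u := by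
    have := hBy; rw [add_comm] at this; exact eq_sub_of_add_eq this
  have hzne : z ≠ 0 := by
    intro hz0
    have hyne : y ≠ 0 := hne.resolve_left (fun h => h hz0)
    have hw1 : w = fun _ => (1:ℝ) := by
      rw [hz0, Matrix.mulVec_zero, zero_add] at hAz; exact hAz
    have hsum : (∑ i, y i) = 0 := by
      have : w ⬝ᵥ y = ∑ i, y i := by simp [hw1, dotProduct]
      linarith
    have : y = 0 := by
      funext i
      have := (Finset.sum_eq_zero_iff_of_nonneg (fun i _ => hy i)).1 hsum i (Finset.mem_univ i)
      simpa using this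
    exact hyne this
  have hyne : y ≠ 0 := by
    intro hy0
    have hu1 : u = fun _ => (1:ℝ) := by
      rw [hy0, Matrix.mulVec_zero, add_zero] at hBy; exact hBy
    have hsum : (∑ j, z j) = 0 := by
      have : z ⬝ᵥ u = ∑ j, z j := by simp [hu1, dotProduct]
      linarith
    have : z = 0 := by
      funext j
      have := (Finset.sum_eq_zero_iff_of_nonneg (fun j _ => hz j)).1 hsum j (Finset.mem_univ j)
      simpa using this
    exact hzne (hne.resolve_right (fun h => h hy0) |> fun hh => (this ▸ rfl))
  set S := ∑ i, y i with hS
  set T := ∑ j, z j with hT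
  have hSpos : 0 < S := by
    obtain ⟨i, hi⟩ := Function.ne_iff.1 hyne
    exact Finset.sum_pos' (fun i _ => hy i) ⟨i, Finset.mem_univ i, lt_of_le_of_ne (hy i) (Ne.symm hi)⟩
  have hTpos : 0 < T := by
    obtain ⟨j, hj⟩ := Function.ne_iff.1 hzne
    exact Finset.sum_pos' (fun j _ => hz j) ⟨j, Finset.mem_univ j, lt_of_le_of_ne (hz j) (Ne.symm hj)⟩
  -- key dot products
  have hyw : y ⬝ᵥ w = 0 := by rwa [dotProduct_comm] at hwy
  have huz : u ⬝ᵥ z = 0 := by rwa [dotProduct_comm] at hzu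
  have hyAz : y ⬝ᵥ A.mulVec z = S := by
    rw [hAz', dotProduct_sub, hyw]; simp [dotProduct, hS]
  have hAzle : ∀ y' : Fin m → ℝ, (∀ i, 0 ≤ y' i) → (∑ i, y' i) = 1 →
      y' ⬝ᵥ A.mulVec z ≤ 1 := by
    intro y' hy' hsum
    rw [hAz', dotProduct_sub]
    have h1 : y' ⬝ᵥ (fun _ => (1:ℝ)) = 1 := by simp [dotProduct, hsum]
    have h2 : 0 ≤ y' ⬝ᵥ w := Finset.sum_nonneg fun i _ => mul_nonneg (hy' i) (hw i)
    linarith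
  have hyBz : ∀ z' : Fin n → ℝ, y ⬝ᵥ B.mulVec z' = ((fun _ => (1:ℝ)) - u) ⬝ᵥ z' := by
    intro z'
    rw [Matrix.dotProduct_mulVec, ← hBy', Matrix.mulVec_transpose]
  have hyBzle : ∀ z' : Fin n → ℝ, (∀ j, 0 ≤ z' j) → (∑ j, z' j) = 1 →
      y ⬝ᵥ B.mulVec z' ≤ 1 := by
    intro z' hz' hsum
    rw [hyBz, sub_dotProduct]
    have h1 : (fun _ => (1:ℝ)) ⬝ᵥ z' = 1 := by simp [dotProduct, hsum]
    have h2 : 0 ≤ u ⬝ᵥ z' := Finset.sum_nonneg fun j _ => mul_nonneg (hu j) (hz' j)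
    linarith
  have hyBzval : y ⬝ᵥ B.mulVec z = T := by
    rw [hyBz, sub_dotProduct, huz]; simp [dotProduct, hT]
  refine ⟨hzne, hyne, ?_, ?_, ?_, ?_, ?_, ?_⟩
  · intro i; exact mul_nonneg (inv_nonneg.2 hSpos.le) (hy i)
  · simp only [Pi.smul_apply, smul_eq_mul, ← Finset.mul_sum]
    rw [inv_mul_cancel₀ hSpos.ne']
  · intro j; exact mul_nonneg (inv_nonneg.2 hTpos.le) (hz j)
  · simp only [Pi.smul_apply, smul_eq_mul, ← Finset.mul_sum]
    rw [inv_mul_cancel₀ hTpos.ne']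
  · intro y' hy' hsum
    simp only [Matrix.mulVec_smul, dotProduct_smul, smul_dotProduct, smul_eq_mul, hyAz]
    have h1 := hAzle y' hy' hsum
    have h2 : (0:ℝ) < T⁻¹ := inv_pos.2 hTpos
    have h3 : S⁻¹ * S = 1 := inv_mul_cancel₀ hSpos.ne'
    nlinarith [mul_le_mul_of_nonneg_left h1 h2.le]
  · intro z' hz' hsum
    simp only [Matrix.mulVec_smul, dotProduct_smul, smul_dotProduct, smul_eq_mul, hyBzval]
    have h1 := hyBzle z' hz' hsum
    have h2 : (0:ℝ) < S⁻¹ := inv_pos.2 hSpos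
    have h3 : T⁻¹ * T = 1 := inv_mul_cancel₀ hTpos.ne'
    nlinarith [mul_le_mul_of_nonneg_left h1 h2.le]
end
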